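/- arXiv:1910.09901 — 9 statements merged into one kernel-verified Lean document; each statement's English description precedes it below -/
import Mathlib

section
/- Let X ⊆ ℝ^n be a nonempty convex set, let α > 0, let h ∈ ℝ^n, let y ∈ X, and suppose x* ∈ X minimizes the surrogate f̂(x) = (1/(2α))‖x − y‖² + ⟨h, x − y⟩ over x ∈ X. Then ⟨x* − y, h⟩ ≤ −(1/α)‖x* − y‖². -/
open scoped RealInnerProductSpace

/-- the surrogate minimizer `x*` of
`f̂(x) = (1/(2α))‖x − y‖² + ⟨h, x − y⟩` over convex `X` satisfies
`⟨x* − y, h⟩ ≤ −(1/α)‖x* − y‖²`. -/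
theorem stmt4 (n : ℕ) (X : Set (EuclideanSpace ℝ (Fin n))) (hX : X.Nonempty)
    (hconv : Convex ℝ X) (α : ℝ) (hα : 0 < α)
    (h y : EuclideanSpace ℝ (Fin n)) (hy : y ∈ X)
    (xstar : EuclideanSpace ℝ (Fin n)) (hxstar : xstar ∈ X)
    (hmin : ∀ x ∈ X,
      (1 / (2 * α)) * ‖xstar - y‖ ^ 2 + ⟪h, xstar - y⟫
        ≤ (1 / (2 * α)) * ‖x - y‖ ^ 2 + ⟪h, x - y⟫) :
    ⟪xstar - y, h⟫ ≤ -(1 / α) * ‖xstar - y‖ ^ 2 := by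
  set d := xstar - y with hd
  rw [real_inner_comm]
  have key : ∀ t : ℝ, 0 < t → t ≤ 1 →
      ⟪h, d⟫ ≤ -(1 / α) * ‖d‖ ^ 2 + (t / (2 * α)) * ‖d‖ ^ 2 := by
    intro t ht ht1
    set x : EuclideanSpace ℝ (Fin n) := xstar + t • (y - xstar) with hx
    have hxmem : x ∈ X := by
      have := hconv hxstar hy (by linarith : (0:ℝ) ≤ 1 - t) ht.le (by ring)
      have heq : (1 - t) • xstar + t • y = x := by
        rw [hx]; module
      rwa [heq] at this
    have hxy : x - y = (1 - t) • d := by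
      rw [hx, hd]; module
    have h1 : ‖x - y‖ ^ 2 = (1 - t) ^ 2 * ‖d‖ ^ 2 := by
      rw [hxy, norm_smul, Real.norm_eq_abs, mul_pow, sq_abs]
    have h2 : ⟪h, x - y⟫ = (1 - t) * ⟪h, d⟫ := by
      rw [hxy, real_inner_smul_right]
    have h3 := hmin x hxmem
    rw [h1, h2] at h3
    have hα' : (0:ℝ) < 2 * α := by linarith
    have h4 : t * ⟪h, d⟫ ≤ (1 / (2 * α)) * ((1 - t) ^ 2 - 1) * ‖d‖ ^ 2 := by
      nlinarith [h3]
    have h5 : (1 / (2 * α)) * ((1 - t) ^ 2 - 1) * ‖d‖ ^ 2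
        = t * (-(1 / α) * ‖d‖ ^ 2 + (t / (2 * α)) * ‖d‖ ^ 2) := by
      field_simp; ring
    rw [h5] at h4
    exact le_of_mul_le_mul_left (by linarith [h4]) ht
  rcases eq_or_ne d 0 with h0 | h0
  · simp [h0]
  · have hnd : 0 < ‖d‖ ^ 2 := pow_pos (norm_pos_iff.mpr h0) 2
    by_contra hc
    push_neg at hc
    set ε := ⟪h, d⟫ + (1 / α) * ‖d‖ ^ 2 with hε
    have hεpos : 0 < ε := by rw [hε]; linarith
    set t := min 1 (α * ε / ‖d‖ ^ 2) with htdef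
    have ht0 : 0 < t := lt_min one_pos (div_pos (mul_pos hα hεpos) hnd)
    have ht1 : t ≤ 1 := min_le_left _ _
    have hk := key t ht0 ht1
    have htle : t ≤ α * ε / ‖d‖ ^ 2 := min_le_right _ _
    have : (t / (2 * α)) * ‖d‖ ^ 2 ≤ ε / 2 := by
      rw [div_mul_eq_mul_div, div_le_div_iff₀ (by linarith) two_pos]
      calc t * ‖d‖ ^ 2 * 2 ≤ (α * ε / ‖d‖ ^ 2) * ‖d‖ ^ 2 * 2 := by nlinarith
        _ = ε * (2 * α) := by field_simp
    linarith
end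

section
/- Let F : ℝ^n → ℝ be differentiable with gradient ∇F that is Lipschitz continuous with constant L > 0. Let X ⊆ ℝ^n be a nonempty convex set, let α > 0, h ∈ ℝ^n, y ∈ X, and suppose x* ∈ X minimizes f̂(x) = (1/(2α))‖x − y‖² + ⟨h, x − y⟩ over x ∈ X. If moreover ‖x* − y‖/α ≥ ε for some ε > 0, then F(x*) − F(y) ≤ −( (1/α)(1 − ‖∇F(y) − h‖/ε) − L/2 ) · ‖x* − y‖². -/
open scoped RealInnerProductSpace

set_option maxHeartbeats 1000000 in
/-- sufficient-decrease inequality for the surrogate minimizer: if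
`x*` minimizes `f̂(x) = (1/(2α))‖x − y‖² + ⟨h, x − y⟩` over the convex set `X`
and `‖x* − y‖/α ≥ ε`, then
`F(x*) − F(y) ≤ −((1/α)(1 − ‖∇F(y) − h‖/ε) − L/2)·‖x* − y‖²`. -/
theorem stmt8 (n : ℕ) (F : EuclideanSpace ℝ (Fin n) → ℝ)
    (Fgrad : EuclideanSpace ℝ (Fin n) → EuclideanSpace ℝ (Fin n))
    (hF : ∀ x, HasGradientAt F (Fgrad x) x)
    (L : ℝ) (hL : 0 < L)
    (hLip : ∀ x y, ‖Fgrad x - Fgrad y‖ ≤ L * ‖x - y‖)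
    (X : Set (EuclideanSpace ℝ (Fin n))) (hX : X.Nonempty) (hconv : Convex ℝ X)
    (α : ℝ) (hα : 0 < α) (h y : EuclideanSpace ℝ (Fin n)) (hy : y ∈ X)
    (xstar : EuclideanSpace ℝ (Fin n)) (hxstar : xstar ∈ X)
    (hmin : ∀ x ∈ X,
      (1 / (2 * α)) * ‖xstar - y‖ ^ 2 + ⟪h, xstar - y⟫
        ≤ (1 / (2 * α)) * ‖x - y‖ ^ 2 + ⟪h, x - y⟫)
    (ε : ℝ) (hε : 0 < ε) (hstep : ‖xstar - y‖ / α ≥ ε) :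
    F xstar - F y ≤
      -((1 / α) * (1 - ‖Fgrad y - h‖ / ε) - L / 2) * ‖xstar - y‖ ^ 2 := by
  set d := xstar - y with hd
  -- continuity of the gradient
  have hcontg : Continuous Fgrad := by
    have : LipschitzWith L.toNNReal Fgrad := by
      apply LipschitzWith.of_dist_le_mul
      intro a b
      simpa [dist_eq_norm, Real.coe_toNNReal L hL.le] using hLip a b
    exact this.continuous
  -- step 1 : variational inequality at y
  have key1 : ⟪h, d⟫ ≤ -(1/α) * ‖d‖^2 := by
    have hstep' : ∀ t ∈ Set.Ioo (0:ℝ) 1, ⟪h, d⟫ ≤ -((1+t)/(2*α)) * ‖d‖^2 := by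
      intro t ht
      have hxt : y + t • d ∈ X := by
        have := hconv hy hxstar (by linarith [ht.1.le, ht.2.le] : (0:ℝ) ≤ 1 - t) ht.1.le (by ring)
        convert this using 1
        simp [hd, smul_sub]
        module
      have := hmin _ hxt
      have hsimp : (y + t • d) - y = t • d := by abel
      rw [hsimp, norm_smul, real_inner_smul_right] at this
      have h2 : (1/(2*α)) * ‖d‖^2 + ⟪h, d⟫ ≤ (1/(2*α)) * (t^2 * ‖d‖^2) + t * ⟪h, d⟫ := by
        calc (1/(2*α)) * ‖d‖^2 + ⟪h, d⟫ ≤ (1/(2*α)) * (‖t‖*‖d‖)^2 + t * ⟪h, d⟫ := this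
        _ = (1/(2*α)) * (t^2 * ‖d‖^2) + t * ⟪h, d⟫ := by
            rw [Real.norm_eq_abs, abs_of_pos ht.1]; ring
      have ht1 : 0 < 1 - t := by linarith [ht.2]
      have h4 : (1-t) * ⟪h, d⟫ ≤ (1-t) * (-((1+t)/(2*α)) * ‖d‖^2) := by
        have heq : (1-t) * (-((1+t)/(2*α)) * ‖d‖^2)
            = 1/(2*α) * (t^2*‖d‖^2) - 1/(2*α) * ‖d‖^2 := by field_simp; ring
        rw [heq]; linarith
      exact (mul_le_mul_iff_right₀ ht1).mp h4
    have htends : Filter.Tendsto (fun t : ℝ => -((1+t)/(2*α)) * ‖d‖^2) (nhdsWithin 1 (Set.Iio 1)) (nhds (-(1/α) * ‖d‖^2)) := by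
      have hc : Continuous (fun t : ℝ => -((1+t)/(2*α)) * ‖d‖^2) := by fun_prop
      have heqv : -(1/α) * ‖d‖^2 = -((1+(1:ℝ))/(2*α)) * ‖d‖^2 := by
        field_simp
        ring
      rw [heqv]
      exact (hc.tendsto 1).mono_left nhdsWithin_le_nhds
    refine ge_of_tendsto htends ?_
    filter_upwards [Ioo_mem_nhdsLT_of_mem (by constructor <;> norm_num : (1:ℝ) ∈ Set.Ioc 0 1)] with t ht
    exact hstep' t ht
  -- step 2 : descent lemma
  have key2 : F xstar - F y ≤ ⟪Fgrad y, d⟫ + L/2 * ‖d‖^2 := by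
    set g : ℝ → ℝ := fun t => F (y + t • d) with hg
    have hderiv : ∀ t : ℝ, HasDerivAt g ⟪Fgrad (y + t • d), d⟫ t := by
      intro t
      have h1 : HasDerivAt (fun t : ℝ => y + t • d) d t := by
        simpa using ((hasDerivAt_id t).smul_const d).const_add y
      have h2 := (hF (y + t • d)).hasFDerivAt
      have h3 := h2.comp_hasDerivAt t h1
      simp at h3
      exact h3
    have hcont : Continuous (fun t : ℝ => ⟪Fgrad (y + t • d), d⟫) :=
      (hcontg.comp (by continuity)).inner continuous_const
    have heq : F xstar - F y = ∫ t in (0:ℝ)..1, ⟪Fgrad (y + t • d), d⟫ := by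
      have := intervalIntegral.integral_eq_sub_of_hasDerivAt
        (fun t _ => hderiv t) (hcont.intervalIntegrable 0 1)
      rw [this]
      simp [hg, hd]
    rw [heq]
    have hb : ∫ t in (0:ℝ)..1, (⟪Fgrad y, d⟫ + L * t * ‖d‖^2) = ⟪Fgrad y, d⟫ + L/2 * ‖d‖^2 := by
      have hint2 : IntervalIntegrable (fun t : ℝ => L * t * ‖d‖^2) MeasureTheory.volume 0 1 :=
        (by fun_prop : Continuous fun t : ℝ => L*t*‖d‖^2).intervalIntegrable 0 1
      rw [intervalIntegral.integral_add intervalIntegrable_const hint2]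
      have : ∫ t in (0:ℝ)..1, L * t * ‖d‖^2 = ∫ t in (0:ℝ)..1, t * (L * ‖d‖^2) := by
        congr 1; ext t; ring
      rw [this, intervalIntegral.integral_mul_const, integral_id]
      simp; ring
    rw [← hb]
    apply intervalIntegral.integral_mono_on zero_le_one
      (hcont.intervalIntegrable 0 1)
      ((by fun_prop : Continuous (fun t : ℝ => ⟪Fgrad y, d⟫ + L * t * ‖d‖^2)).intervalIntegrable 0 1)
    intro t ht
    have : ⟪Fgrad (y + t • d), d⟫ - ⟪Fgrad y, d⟫ = ⟪Fgrad (y + t • d) - Fgrad y, d⟫ := by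
      rw [inner_sub_left]
    have hb1 : ⟪Fgrad (y + t • d) - Fgrad y, d⟫ ≤ ‖Fgrad (y + t • d) - Fgrad y‖ * ‖d‖ :=
      real_inner_le_norm _ _
    have hb2 : ‖Fgrad (y + t • d) - Fgrad y‖ ≤ L * (t * ‖d‖) := by
      have := hLip (y + t • d) y
      simpa [norm_smul, abs_of_nonneg ht.1] using this
    nlinarith [norm_nonneg d, norm_nonneg (Fgrad (y + t • d) - Fgrad y)]
  -- step 3 : combine
  have key3 : ⟪Fgrad y, d⟫ ≤ ⟪h, d⟫ + ‖Fgrad y - h‖ * ‖d‖ := by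
    have : ⟪Fgrad y, d⟫ = ⟪h, d⟫ + ⟪Fgrad y - h, d⟫ := by rw [inner_sub_left]; ring
    rw [this]
    linarith [real_inner_le_norm (Fgrad y - h) d]
  have hdlb : α * ε ≤ ‖d‖ := by
    rw [ge_iff_le, le_div_iff₀ hα] at hstep
    linarith
  have key4 : ‖d‖ ≤ ‖d‖^2 / (α * ε) := by
    rw [le_div_iff₀ (by positivity)]
    nlinarith [norm_nonneg d]
  have hnn : 0 ≤ ‖Fgrad y - h‖ := norm_nonneg _
  have key5 : ‖Fgrad y - h‖ * ‖d‖ ≤ ‖Fgrad y - h‖ * (‖d‖^2 / (α * ε)) :=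
    mul_le_mul_of_nonneg_left key4 hnn
  have htar : ∀ N c : ℝ, -((1 / α) * (1 - c / ε) - L / 2) * N
      = -(1/α) * N + c * (N / (α * ε)) + L/2 * N := by
    intro N c
    field_simp
    ring
  rw [htar (‖d‖ ^ 2) ‖Fgrad y - h‖]
  linarith
end

section
/- Let X ⊆ ℝ^n be a nonempty, compact, convex set and let F : ℝ^n → ℝ be differentiable with gradient ∇F that is Lipschitz continuous with constant L > 0. Let (α_k)_{k≥1} be a positive, nonincreasing sequence with α_k → 0 and Σ_{k≥1} α_k = ∞, let (h^k)_{k≥1} be vectors in ℝ^n with ‖h^k − ∇F(x^{k−1})‖ → 0, and let (x^k)_{k≥0} with x^0 ∈ X be such that for every k ≥ 1, x^k ∈ X minimizes f̂^k(x) = (1/(2α_k))‖x − x^{k−1}‖² + ⟨h^k, x − x^{k−1}⟩ over x ∈ X. Then liminf_{k→∞} ‖x^k − x^{k−1}‖/α_k = 0; equivalently, there exists a subsequence (k_j) along which ‖x^{k_j} − x^{k_j−1}‖/α_{k_j} → 0. -/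
open scoped RealInnerProductSpace
open Filter Topology

private lemma descent_aux {E : Type*} [NormedAddCommGroup E] [InnerProductSpace ℝ E]
    [CompleteSpace E]
    (F : E → ℝ) (G : E → E) (hF : ∀ z, HasGradientAt F (G z) z)
    (L : ℝ) (hL0 : 0 ≤ L) (hLip : ∀ a b, ‖G a - G b‖ ≤ L * ‖a - b‖) (x y : E) :
    F y ≤ F x + ⟪G x, y - x⟫ + L * ‖y - x‖ ^ 2 := by
  have hbound : ∀ z ∈ segment ℝ x y,
      ‖(InnerProductSpace.toDual ℝ E (G z) : E →L[ℝ] ℝ) - InnerProductSpace.toDual ℝ E (G x)‖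
        ≤ L * ‖y - x‖ := by
    intro z hz
    rw [segment_eq_image'] at hz
    obtain ⟨t, ⟨ht0, ht1⟩, rfl⟩ := hz
    have h1 : ‖x + t • (y - x) - x‖ ≤ ‖y - x‖ := by
      rw [add_sub_cancel_left, norm_smul, Real.norm_eq_abs, abs_of_nonneg ht0]
      nlinarith [norm_nonneg (y - x)]
    calc ‖(InnerProductSpace.toDual ℝ E (G (x + t • (y - x))) : E →L[ℝ] ℝ)
          - InnerProductSpace.toDual ℝ E (G x)‖
        = ‖G (x + t • (y - x)) - G x‖ := by
          rw [← map_sub]; exact (InnerProductSpace.toDual ℝ E).norm_map _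
      _ ≤ L * ‖x + t • (y - x) - x‖ := hLip _ _
      _ ≤ L * ‖y - x‖ := mul_le_mul_of_nonneg_left h1 hL0
  have key := Convex.norm_image_sub_le_of_norm_hasFDerivWithin_le'
    (f := F) (f' := fun z => InnerProductSpace.toDual ℝ E (G z))
    (φ := InnerProductSpace.toDual ℝ E (G x)) (s := segment ℝ x y)
    (fun z _ => ((hF z).hasFDerivAt).hasFDerivWithinAt) hbound (convex_segment x y)
    (left_mem_segment ℝ x y) (right_mem_segment ℝ x y)
  rw [InnerProductSpace.toDual_apply_apply, Real.norm_eq_abs] at key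
  have habs := abs_le.mp key
  have : L * ‖y - x‖ * ‖y - x‖ = L * ‖y - x‖ ^ 2 := by ring
  nlinarith [habs.2]


private lemma step_arith (a s e i c L Fk Fw : ℝ) (ha : 0 < a) (hs0 : 0 ≤ s) (hc : 0 < c)
    (hL0 : 0 ≤ L) (hge : c * a ≤ s) (f2 : s ^ 2 + 2 * a * i ≤ 0)
    (f1 : Fk ≤ Fw + i + e * s + L * s ^ 2) (f4 : e ≤ c / 4) (f5 : L * a ≤ 1 / 8) :
    Fk + c ^ 2 / 8 * a ≤ Fw := by
  have u1 : e * s ≤ (c / 4) * s := mul_le_mul_of_nonneg_right f4 hs0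
  have u2 : c * a * s ≤ s * s := mul_le_mul_of_nonneg_right hge hs0
  have u3 : (L * a) * s ^ 2 ≤ (1 / 8) * s ^ 2 := mul_le_mul_of_nonneg_right f5 (sq_nonneg s)
  have u4 : (c * a) * (c * a) ≤ s * s := mul_self_le_mul_self (by positivity) hge
  have key8 : 8 * a * (i + e * s + L * s ^ 2 + c ^ 2 / 8 * a) ≤ 0 := by
    nlinarith [mul_le_mul_of_nonneg_left u1 (by linarith : (0:ℝ) ≤ 8 * a)]
  have h8 : 0 < 8 * a := by linarith
  have hfin : i + e * s + L * s ^ 2 + c ^ 2 / 8 * a ≤ 0 :=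
    (mul_le_mul_iff_right₀ h8).mp (by rw [mul_zero]; exact key8)
  linarith

/-- under compactness of `X`, `L`-Lipschitz gradient, nonincreasing
positive step sizes with `α_k → 0`, `Σ α_k = ∞`, asymptotically exact gradient
estimates `‖h^k − ∇F(x^{k−1})‖ → 0`, and surrogate-minimizing iterates, there is a
subsequence `(k_j)` along which `‖x^{k_j} − x^{k_j−1}‖/α_{k_j} → 0`. -/
theorem stmt10 (n : ℕ) (X : Set (EuclideanSpace ℝ (Fin n))) (hX : X.Nonempty)
    (hcomp : IsCompact X) (hconv : Convex ℝ X)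
    (F : EuclideanSpace ℝ (Fin n) → ℝ)
    (Fgrad : EuclideanSpace ℝ (Fin n) → EuclideanSpace ℝ (Fin n))
    (hF : ∀ x, HasGradientAt F (Fgrad x) x)
    (L : ℝ) (hL : 0 < L)
    (hLip : ∀ x y, ‖Fgrad x - Fgrad y‖ ≤ L * ‖x - y‖)
    (α : ℕ → ℝ) (hαpos : ∀ k, 1 ≤ k → 0 < α k)
    (hαmono : ∀ k, 1 ≤ k → α (k + 1) ≤ α k)
    (hα0 : Tendsto α atTop (𝓝 0))
    (hαdiv : Tendsto (fun m => ∑ k ∈ Finset.Icc 1 m, α k) atTop atTop)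
    (h x : ℕ → EuclideanSpace ℝ (Fin n))
    (hherr : Tendsto (fun k => ‖h k - Fgrad (x (k - 1))‖) atTop (𝓝 0))
    (hx0 : x 0 ∈ X) (hxX : ∀ k, 1 ≤ k → x k ∈ X)
    (hmin : ∀ k, 1 ≤ k → ∀ z ∈ X,
      (1 / (2 * α k)) * ‖x k - x (k - 1)‖ ^ 2 + ⟪h k, x k - x (k - 1)⟫
        ≤ (1 / (2 * α k)) * ‖z - x (k - 1)‖ ^ 2 + ⟪h k, z - x (k - 1)⟫) :
    ∃ φ : ℕ → ℕ, StrictMono φ ∧ (∀ j, 1 ≤ φ j) ∧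
      Tendsto (fun j => ‖x (φ j) - x (φ j - 1)‖ / α (φ j)) atTop (𝓝 0) := by
  -- all iterates are in X
  have hxmem : ∀ k, x k ∈ X := by
    intro k
    cases k with
    | zero => exact hx0
    | succ m => exact hxX (m + 1) (Nat.succ_le_succ (Nat.zero_le m))
  -- F is continuous, hence bounded below on X
  have hFc : Continuous F := by
    have hdiff : Differentiable ℝ F := fun z => ((hF z).hasFDerivAt).differentiableAt
    exact hdiff.continuous
  obtain ⟨z₀, hz₀X, hz₀min⟩ := hcomp.exists_isMinOn hX hFc.continuousOn
  set B : ℝ := F z₀ with hB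
  have hBle : ∀ y ∈ X, B ≤ F y := fun y hy => hz₀min hy
  -- key inequality from the minimization
  have hA : ∀ k, 1 ≤ k →
      (1 / (2 * α k)) * ‖x k - x (k - 1)‖ ^ 2 + ⟪h k, x k - x (k - 1)⟫ ≤ 0 := by
    intro k hk
    have := hmin k hk (x (k - 1)) (hxmem _)
    simpa using this
  -- frequently small steps
  have freq : ∀ m : ℕ, ∃ᶠ k in atTop,
      1 ≤ k ∧ ‖x k - x (k - 1)‖ / α k < 1 / ((m : ℝ) + 1) := by
    intro m
    by_contra hcon
    rw [not_frequently] at hcon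
    set c : ℝ := 1 / ((m : ℝ) + 1) with hc
    have hcpos : 0 < c := by positivity
    have h1 : ∀ᶠ k in atTop, ‖h k - Fgrad (x (k - 1))‖ < c / 4 :=
      hherr.eventually_lt_const (by positivity)
    have h2 : ∀ᶠ k in atTop, α k < 1 / (8 * L) :=
      hα0.eventually_lt_const (by positivity)
    obtain ⟨N, hN⟩ := eventually_atTop.mp ((hcon.and h1).and h2)
    set N₀ : ℕ := max N 1 with hN₀
    have hN₀1 : 1 ≤ N₀ := le_max_right _ _
    -- per-step decrease
    have step : ∀ k, N₀ + 1 ≤ k → F (x k) + c ^ 2 / 8 * α k ≤ F (x (k - 1)) := by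
      intro k hk
      have hk1 : 1 ≤ k := by omega
      have hkN : N ≤ k := by omega
      obtain ⟨⟨hnot, he⟩, hαk⟩ := hN k hkN
      have ha : 0 < α k := hαpos k hk1
      have hs0 : (0:ℝ) ≤ ‖x k - x (k - 1)‖ := norm_nonneg _
      have hge : c * α k ≤ ‖x k - x (k - 1)‖ := by
        have hcd : c ≤ ‖x k - x (k - 1)‖ / α k := by
          by_contra hh
          push_neg at hh
          exact hnot ⟨hk1, hh⟩
        rw [le_div_iff₀ ha] at hcd
        linarith
      have hane : α k ≠ 0 := ne_of_gt ha
      have f2' : ‖x k - x (k - 1)‖ ^ 2 + 2 * α k * ⟪h k, x k - x (k - 1)⟫ ≤ 0 := by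
        have h' := mul_le_mul_of_nonneg_left (hA k hk1) (by linarith : (0:ℝ) ≤ 2 * α k)
        rw [mul_zero] at h'
        have heq : (2 * α k) * ((1 / (2 * α k)) * ‖x k - x (k - 1)‖ ^ 2
            + ⟪h k, x k - x (k - 1)⟫)
            = ‖x k - x (k - 1)‖ ^ 2 + 2 * α k * ⟪h k, x k - x (k - 1)⟫ := by
          field_simp
        rw [heq] at h'
        exact h'
      have hdesc : F (x k) ≤ F (x (k - 1)) + ⟪Fgrad (x (k - 1)), x k - x (k - 1)⟫
          + L * ‖x k - x (k - 1)‖ ^ 2 :=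
        descent_aux F Fgrad hF L hL.le hLip (x (k - 1)) (x k)
      have hsplit : ⟪Fgrad (x (k - 1)), x k - x (k - 1)⟫
          = ⟪h k, x k - x (k - 1)⟫ + ⟪Fgrad (x (k - 1)) - h k, x k - x (k - 1)⟫ := by
        rw [← inner_add_left]
        congr 1
        abel
      have hCS : ⟪Fgrad (x (k - 1)) - h k, x k - x (k - 1)⟫
          ≤ ‖h k - Fgrad (x (k - 1))‖ * ‖x k - x (k - 1)‖ := by
        calc ⟪Fgrad (x (k - 1)) - h k, x k - x (k - 1)⟫
            ≤ ‖Fgrad (x (k - 1)) - h k‖ * ‖x k - x (k - 1)‖ := real_inner_le_norm _ _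
          _ = ‖h k - Fgrad (x (k - 1))‖ * ‖x k - x (k - 1)‖ := by rw [norm_sub_rev]
      have f1 : F (x k) ≤ F (x (k - 1)) + ⟪h k, x k - x (k - 1)⟫
          + ‖h k - Fgrad (x (k - 1))‖ * ‖x k - x (k - 1)‖ + L * ‖x k - x (k - 1)‖ ^ 2 := by
        rw [hsplit] at hdesc
        linarith
      have f5 : L * α k ≤ 1 / 8 := by
        rw [lt_div_iff₀ (by positivity)] at hαk
        nlinarith
      exact step_arith (α k) (‖x k - x (k - 1)‖) (‖h k - Fgrad (x (k - 1))‖)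
        (⟪h k, x k - x (k - 1)⟫) c L (F (x k)) (F (x (k - 1))) ha hs0 hcpos hL.le hge f2'
        (by linarith) he.le f5
    -- telescoping
    have key : ∀ m', N₀ ≤ m' →
        F (x m') + c ^ 2 / 8 * (∑ k ∈ Finset.Icc (N₀ + 1) m', α k) ≤ F (x N₀) := by
      intro m' hm'
      induction m', hm' using Nat.le_induction with
      | base => rw [Finset.Icc_eq_empty (by omega)]; simp
      | succ p hp ih =>
        have hstep := step (p + 1) (by omega)
        simp only [Nat.add_sub_cancel] at hstep
        rw [Finset.sum_Icc_succ_top (by omega : N₀ + 1 ≤ p + 1)]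
        have hdist : c ^ 2 / 8 * ((∑ k ∈ Finset.Icc (N₀ + 1) p, α k) + α (p + 1))
            = c ^ 2 / 8 * (∑ k ∈ Finset.Icc (N₀ + 1) p, α k) + c ^ 2 / 8 * α (p + 1) := by ring
        rw [hdist]
        linarith
    -- sum splitting
    have hsum : ∀ m', N₀ ≤ m' → ∑ k ∈ Finset.Icc 1 m', α k
        = (∑ k ∈ Finset.Icc 1 N₀, α k) + ∑ k ∈ Finset.Icc (N₀ + 1) m', α k := by
      intro m' hm'
      rw [show (1:ℕ) = 0 + 1 from rfl, Finset.Icc_add_one_left_eq_Ioc, Finset.Icc_add_one_left_eq_Ioc, ← add_assoc, add_zero, Finset.Icc_add_one_left_eq_Ioc]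
      exact (Finset.sum_Ioc_consecutive _ (Nat.zero_le N₀) hm').symm
    -- contradiction with divergence
    have hbig : ∀ᶠ m' in atTop,
        (∑ k ∈ Finset.Icc 1 N₀, α k) + 8 / c ^ 2 * (F (x N₀) - B) + 1
          ≤ ∑ k ∈ Finset.Icc 1 m', α k :=
      hαdiv.eventually_ge_atTop _
    obtain ⟨m', hm'N₀, hm'big⟩ := ((eventually_ge_atTop N₀).and hbig).exists
    have hkey := key m' hm'N₀
    have hBm := hBle (x m') (hxmem m')
    rw [hsum m' hm'N₀] at hm'big
    have hc2 : 0 < c ^ 2 := by positivity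
    have : c ^ 2 / 8 * (∑ k ∈ Finset.Icc (N₀ + 1) m', α k) ≤ F (x N₀) - B := by linarith
    have hS : 8 / c ^ 2 * (F (x N₀) - B) + 1 ≤ ∑ k ∈ Finset.Icc (N₀ + 1) m', α k := by
      linarith
    have hmul := mul_le_mul_of_nonneg_left hS (show (0:ℝ) ≤ c ^ 2 / 8 by positivity)
    have hid : c ^ 2 / 8 * (8 / c ^ 2 * (F (x N₀) - B) + 1) = (F (x N₀) - B) + c ^ 2 / 8 := by
      field_simp
    rw [hid] at hmul
    linarith
  -- extract the subsequence
  obtain ⟨φ, hφmono, hφ⟩ := extraction_forall_of_frequently freq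
  refine ⟨φ, hφmono, fun j => (hφ j).1, ?_⟩
  refine squeeze_zero (fun j => div_nonneg (norm_nonneg _) (hαpos _ (hφ j).1).le)
    (fun j => (hφ j).2.le) tendsto_one_div_add_atTop_nhds_zero_nat
end

section
/- Let X ⊆ ℝ^n be a nonempty, closed, convex set and let F : ℝ^n → ℝ be differentiable with continuous gradient ∇F. Let (α_k)_{k≥1} be positive reals, (h^k)_{k≥1} vectors in ℝ^n, and (x^k)_{k≥0} a sequence with x^0 ∈ X such that for every k ≥ 1, x^k ∈ X minimizes f̂^k(x) = (1/(2α_k))‖x − x^{k−1}‖² + ⟨h^k, x − x^{k−1}⟩ over x ∈ X. Suppose there is a subsequence (k_j) with x^{k_j} → x̄, ‖x^{k_j} − x^{k_j−1}‖/α_{k_j} → 0, and ‖h^{k_j} − ∇F(x^{k_j})‖ → 0. Then x̄ ∈ X and ⟨x − x̄, ∇F(x̄)⟩ ≥ 0 for every x ∈ X, i.e., x̄ is a stationary point of the problem min_{x∈X} F(x). -/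
open scoped RealInnerProductSpace
open Filter Topology

set_option maxHeartbeats 1000000 in
/-- if along a subsequence the iterates converge to `x̄`, the
normalized step lengths vanish, and the gradient-estimate errors vanish, then the
limit `x̄` is a stationary point of `min_{x∈X} F(x)`:
`x̄ ∈ X` and `⟨x − x̄, ∇F(x̄)⟩ ≥ 0` for all `x ∈ X`. -/
theorem stmt11 (n : ℕ) (X : Set (EuclideanSpace ℝ (Fin n))) (hX : X.Nonempty)
    (hclosed : IsClosed X) (hconv : Convex ℝ X)
    (F : EuclideanSpace ℝ (Fin n) → ℝ)
    (Fgrad : EuclideanSpace ℝ (Fin n) → EuclideanSpace ℝ (Fin n))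
    (hF : ∀ x, HasGradientAt F (Fgrad x) x)
    (hFgradCont : Continuous Fgrad)
    (α : ℕ → ℝ) (hαpos : ∀ k, 1 ≤ k → 0 < α k)
    (h x : ℕ → EuclideanSpace ℝ (Fin n))
    (hx0 : x 0 ∈ X) (hxX : ∀ k, 1 ≤ k → x k ∈ X)
    (hmin : ∀ k, 1 ≤ k → ∀ z ∈ X,
      (1 / (2 * α k)) * ‖x k - x (k - 1)‖ ^ 2 + ⟪h k, x k - x (k - 1)⟫
        ≤ (1 / (2 * α k)) * ‖z - x (k - 1)‖ ^ 2 + ⟪h k, z - x (k - 1)⟫)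
    (φ : ℕ → ℕ) (hφ : StrictMono φ) (hφ1 : ∀ j, 1 ≤ φ j)
    (xbar : EuclideanSpace ℝ (Fin n))
    (hconv_sub : Tendsto (fun j => x (φ j)) atTop (𝓝 xbar))
    (hstep : Tendsto (fun j => ‖x (φ j) - x (φ j - 1)‖ / α (φ j)) atTop (𝓝 0))
    (herr : Tendsto (fun j => ‖h (φ j) - Fgrad (x (φ j))‖) atTop (𝓝 0)) :
    xbar ∈ X ∧ ∀ z ∈ X, ⟪z - xbar, Fgrad xbar⟫ ≥ 0 := by
  have hxbarX : xbar ∈ X :=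
    hclosed.mem_of_tendsto hconv_sub (Eventually.of_forall fun j => hxX _ (hφ1 j))
  refine ⟨hxbarX, fun z hz => ?_⟩
  set v : ℕ → EuclideanSpace ℝ (Fin n) :=
    fun j => (α (φ j))⁻¹ • (x (φ j) - x (φ j - 1)) + h (φ j) with hv
  -- per-step variational inequality
  have key : ∀ j, (0:ℝ) ≤ ⟪z - x (φ j), v j⟫ := by
    intro j
    set k := φ j with hk'
    have hk := hφ1 j
    have hα := hαpos k hk
    set u := x k - x (k - 1) with hu
    set d := z - x k with hd
    set M := ‖d‖ ^ 2 / (2 * α k) with hM'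
    have hM : 0 ≤ M := by positivity
    have hIneq : ∀ t : ℝ, 0 < t → t ≤ 1 → 0 ≤ ⟪d, v j⟫ + t * M := by
      intro t ht ht1
      have hzt : x k + t • d ∈ X := by
        have := hconv (hxX k hk) hz (by linarith : (0:ℝ) ≤ 1 - t) ht.le (by ring)
        convert this using 1
        simp only [hd]
        module
      have h2 := hmin k hk _ hzt
      have heq : x k + t • d - x (k - 1) = u + t • d := by
        simp only [hu]; abel
      rw [heq] at h2
      have hexp : ‖u + t • d‖ ^ 2 = ‖u‖ ^ 2 + 2 * (t * ⟪u, d⟫) + t ^ 2 * ‖d‖ ^ 2 := by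
        rw [norm_add_sq_real, real_inner_smul_right, norm_smul]
        rw [Real.norm_eq_abs, mul_pow, sq_abs]
        try ring
      rw [hexp, inner_add_right, real_inner_smul_right] at h2
      have hveq : ⟪d, v j⟫ = (α k)⁻¹ * ⟪u, d⟫ + ⟪h k, d⟫ := by
        rw [hv]
        simp only [← hk', ← hu]
        rw [inner_add_right, real_inner_smul_right, real_inner_comm d u, real_inner_comm d (h k)]
      rw [hveq]
      have hα' : (0:ℝ) < 2 * α k := by linarith
      have h3 : 0 ≤ t * ((α k)⁻¹ * ⟪u, d⟫ + ⟪h k, d⟫ + t * M) := by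
        have : (1 / (2 * α k)) * (2 * (t * ⟪u, d⟫) + t ^ 2 * ‖d‖ ^ 2) + t * ⟪h k, d⟫
            = t * ((α k)⁻¹ * ⟪u, d⟫ + ⟪h k, d⟫ + t * M) := by
          field_simp [hM']
          rw [hM']; field_simp; ring
        nlinarith [h2]
      nlinarith [h3]
    -- conclude 0 ≤ ⟪d, v j⟫
    have : (0:ℝ) ≤ ⟪d, v j⟫ := by
      refine le_of_forall_pos_le_add fun ε hε => ?_
      rcases eq_or_lt_of_le hM with hM0 | hMpos
      · have := hIneq 1 one_pos le_rfl
        rw [← hM0] at this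
        linarith
      · set t : ℝ := min 1 (ε / M) with ht'
        have ht0 : 0 < t := lt_min one_pos (div_pos hε hMpos)
        have ht1 : t ≤ 1 := min_le_left _ _
        have htM : t * M ≤ ε := by
          have : t ≤ ε / M := min_le_right _ _
          calc t * M ≤ (ε / M) * M := by nlinarith
            _ = ε := by field_simp
        have := hIneq t ht0 ht1
        linarith
    exact this
  -- limits
  have h1 : Tendsto (fun j => (α (φ j))⁻¹ • (x (φ j) - x (φ j - 1))) atTop
      (𝓝 (0 : EuclideanSpace ℝ (Fin n))) := by
    rw [tendsto_zero_iff_norm_tendsto_zero]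
    have heq : ∀ j, ‖(α (φ j))⁻¹ • (x (φ j) - x (φ j - 1))‖
        = ‖x (φ j) - x (φ j - 1)‖ / α (φ j) := by
      intro j
      rw [norm_smul, Real.norm_eq_abs, abs_inv, abs_of_pos (hαpos _ (hφ1 j))]
      ring
    simp only [heq]
    exact hstep
  have hgx : Tendsto (fun j => Fgrad (x (φ j))) atTop (𝓝 (Fgrad xbar)) :=
    (hFgradCont.tendsto xbar).comp hconv_sub
  have herr' : Tendsto (fun j => h (φ j) - Fgrad (x (φ j))) atTop
      (𝓝 (0 : EuclideanSpace ℝ (Fin n))) :=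
    tendsto_zero_iff_norm_tendsto_zero.2 herr
  have h2 : Tendsto (fun j => h (φ j)) atTop (𝓝 (Fgrad xbar)) := by
    have h3 := herr'.add hgx
    rw [zero_add] at h3
    refine h3.congr fun j => ?_
    abel
  have htv : Tendsto v atTop (𝓝 (Fgrad xbar)) := by
    have h3 := h1.add h2
    rw [zero_add] at h3
    exact h3
  have htot : Tendsto (fun j => ⟪z - x (φ j), v j⟫) atTop (𝓝 ⟪z - xbar, Fgrad xbar⟫) :=
    (tendsto_const_nhds.sub hconv_sub).inner htv
  exact ge_of_tendsto' htot key
end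

section
/- Let X ⊆ ℝ^n be a nonempty, compact, convex set and let F : ℝ^n → ℝ be differentiable with gradient ∇F that is Lipschitz continuous with constant L > 0. Let (α_k)_{k≥1} be a positive, nonincreasing sequence with α_k → 0 and Σ_{k≥1} α_k = ∞, let (h^k)_{k≥1} be vectors in ℝ^n with ‖h^k − ∇F(x^{k−1})‖ → 0, and let (x^k)_{k≥0} with x^0 ∈ X be such that for every k ≥ 1, x^k ∈ X minimizes f̂^k(x) = (1/(2α_k))‖x − x^{k−1}‖² + ⟨h^k, x − x^{k−1}⟩ over x ∈ X. Then there exists a subsequence (x^{k_j}) converging to a point x̄ ∈ X satisfying ⟨x − x̄, ∇F(x̄)⟩ ≥ 0 for every x ∈ X, i.e., converging to a stationary point of min_{x∈X} F(x). -/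
open scoped RealInnerProductSpace
open Filter Topology

lemma stmt12_descent {E : Type*} [NormedAddCommGroup E] [InnerProductSpace ℝ E] [CompleteSpace E]
    (F : E → ℝ) (Fgrad : E → E) (hF : ∀ x, HasGradientAt F (Fgrad x) x) (L : ℝ) (hL0 : 0 ≤ L)
    (hLip : ∀ x y, ‖Fgrad x - Fgrad y‖ ≤ L * ‖x - y‖) (a b : E) :
    F b ≤ F a + ⟪Fgrad a, b - a⟫ + L * ‖b - a‖ ^ 2 := by
  set g : E → ℝ := fun z => F z - ⟪Fgrad a, z⟫ with hg
  have hgd : ∀ z : E, HasFDerivAt g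
      ((InnerProductSpace.toDual ℝ E (Fgrad z)) - (InnerProductSpace.toDual ℝ E (Fgrad a))) z := by
    intro z
    exact ((hasGradientAt_iff_hasFDerivAt.mp (hF z)).sub
      ((InnerProductSpace.toDual ℝ E (Fgrad a)).hasFDerivAt))
  have key : ‖g b - g a‖ ≤ (L * ‖b - a‖) * ‖b - a‖ := by
    apply Convex.norm_image_sub_le_of_norm_hasFDerivWithin_le
      (f' := fun z => (InnerProductSpace.toDual ℝ E (Fgrad z)) - (InnerProductSpace.toDual ℝ E (Fgrad a)))
      (fun z _ => (hgd z).hasFDerivWithinAt) ?_ (convex_segment a b)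
      (left_mem_segment ℝ a b) (right_mem_segment ℝ a b)
    intro z hz
    rw [show (InnerProductSpace.toDual ℝ E (Fgrad z)) - (InnerProductSpace.toDual ℝ E (Fgrad a))
        = InnerProductSpace.toDual ℝ E (Fgrad z - Fgrad a) by simp [map_sub]]
    rw [(InnerProductSpace.toDual ℝ E).norm_map]
    refine (hLip z a).trans ?_
    gcongr
    rw [segment_eq_image'] at hz
    obtain ⟨t, ht, rfl⟩ := hz
    simp only [add_sub_cancel_left, norm_smul, Real.norm_eq_abs, abs_of_nonneg ht.1]
    calc t * ‖b - a‖ ≤ 1 * ‖b - a‖ := by gcongr; exact ht.2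
      _ = ‖b - a‖ := one_mul _
  have h2 : g b - g a ≤ L * ‖b - a‖ ^ 2 := by
    calc g b - g a ≤ ‖g b - g a‖ := le_abs_self _
      _ ≤ (L * ‖b - a‖) * ‖b - a‖ := key
      _ = L * ‖b - a‖ ^ 2 := by ring
  have heq : g b - g a = F b - F a - ⟪Fgrad a, b - a⟫ := by
    simp only [hg, inner_sub_right]; ring
  linarith [heq ▸ h2]

lemma stmt12_VI {E : Type*} [NormedAddCommGroup E] [InnerProductSpace ℝ E]
    (X : Set E) (hconv : Convex ℝ X) (a : ℝ) (ha : 0 < a) (hk xprev xk : E) (hxk : xk ∈ X)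
    (hmin : ∀ z ∈ X, (1 / (2 * a)) * ‖xk - xprev‖ ^ 2 + ⟪hk, xk - xprev⟫
      ≤ (1 / (2 * a)) * ‖z - xprev‖ ^ 2 + ⟪hk, z - xprev⟫)
    (z : E) (hz : z ∈ X) : 0 ≤ ⟪z - xk, a⁻¹ • (xk - xprev) + hk⟫ := by
  set A : ℝ := ⟪z - xk, a⁻¹ • (xk - xprev) + hk⟫ with hA
  set C : ℝ := ‖z - xk‖ ^ 2 / (2 * a) with hC
  have hC0 : 0 ≤ C := by positivity
  have ha0 : a ≠ 0 := ha.ne'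
  have H : ∀ t : ℝ, 0 < t → t ≤ 1 → 0 ≤ A + t * C := by
    intro t ht ht1
    have hw : xk + t • (z - xk) ∈ X := by
      have := hconv hxk hz (by linarith : (0:ℝ) ≤ 1 - t) ht.le (by ring)
      convert this using 1
      rw [smul_sub, sub_smul, one_smul]; abel
    have hm := hmin _ hw
    rw [add_sub_right_comm, norm_add_sq_real, inner_add_right] at hm
    rw [real_inner_smul_right, norm_smul, mul_pow, Real.norm_eq_abs,
      abs_of_pos ht, real_inner_smul_right] at hm
    have hexp : A = a⁻¹ * ⟪xk - xprev, z - xk⟫ + ⟪hk, z - xk⟫ := by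
      rw [hA, inner_add_right, real_inner_smul_right, real_inner_comm (z - xk) (xk - xprev),
        real_inner_comm (z - xk) hk]
    have hm' : 0 ≤ 1 / (2 * a) * (2 * (t * ⟪xk - xprev, z - xk⟫) + t ^ 2 * ‖z - xk‖ ^ 2)
        + t * ⟪hk, z - xk⟫ := by linarith
    have heq : t * (A + t * C) = 1 / (2 * a) * (2 * (t * ⟪xk - xprev, z - xk⟫)
        + t ^ 2 * ‖z - xk‖ ^ 2) + t * ⟪hk, z - xk⟫ := by
      rw [hexp, hC]; field_simp; ring
    have key : 0 ≤ t * (A + t * C) := heq ▸ hm'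
    nlinarith [key, ht]
  by_contra hneg
  push_neg at hneg
  have ht0 : (0:ℝ) < min 1 (-A / (C + 1)) :=
    lt_min one_pos (div_pos (by linarith) (by positivity))
  have := H _ ht0 (min_le_left _ _)
  have h2 : min 1 (-A / (C + 1)) * C ≤ (-A / (C + 1)) * C :=
    mul_le_mul_of_nonneg_right (min_le_right _ _) hC0
  have h3 : (-A / (C + 1)) * C < -A := by
    rw [div_mul_eq_mul_div, div_lt_iff₀ (by positivity)]
    nlinarith
  linarith

set_option maxHeartbeats 1000000 in
/-- under compactness of `X`, `L`-Lipschitz gradient, nonincreasing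
positive step sizes with `α_k → 0`, `Σ α_k = ∞`, asymptotically exact gradient
estimates, and surrogate-minimizing iterates, some subsequence of `(x^k)` converges
to a stationary point `x̄ ∈ X` of `min_{x∈X} F(x)`. -/
theorem stmt12 (n : ℕ) (X : Set (EuclideanSpace ℝ (Fin n))) (hX : X.Nonempty)
    (hcomp : IsCompact X) (hconv : Convex ℝ X)
    (F : EuclideanSpace ℝ (Fin n) → ℝ)
    (Fgrad : EuclideanSpace ℝ (Fin n) → EuclideanSpace ℝ (Fin n))
    (hF : ∀ x, HasGradientAt F (Fgrad x) x)
    (L : ℝ) (hL : 0 < L)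
    (hLip : ∀ x y, ‖Fgrad x - Fgrad y‖ ≤ L * ‖x - y‖)
    (α : ℕ → ℝ) (hαpos : ∀ k, 1 ≤ k → 0 < α k)
    (hαmono : ∀ k, 1 ≤ k → α (k + 1) ≤ α k)
    (hα0 : Tendsto α atTop (𝓝 0))
    (hαdiv : Tendsto (fun m => ∑ k ∈ Finset.Icc 1 m, α k) atTop atTop)
    (h x : ℕ → EuclideanSpace ℝ (Fin n))
    (hherr : Tendsto (fun k => ‖h k - Fgrad (x (k - 1))‖) atTop (𝓝 0))
    (hx0 : x 0 ∈ X) (hxX : ∀ k, 1 ≤ k → x k ∈ X)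
    (hmin : ∀ k, 1 ≤ k → ∀ z ∈ X,
      (1 / (2 * α k)) * ‖x k - x (k - 1)‖ ^ 2 + ⟪h k, x k - x (k - 1)⟫
        ≤ (1 / (2 * α k)) * ‖z - x (k - 1)‖ ^ 2 + ⟪h k, z - x (k - 1)⟫) :
    ∃ φ : ℕ → ℕ, StrictMono φ ∧ ∃ xbar ∈ X,
      Tendsto (fun j => x (φ j)) atTop (𝓝 xbar) ∧
      ∀ z ∈ X, ⟪z - xbar, Fgrad xbar⟫ ≥ 0 := by
  classical
  set dd : ℕ → ℝ := fun k => ‖x k - x (k - 1)‖ with hdd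
  -- membership for all indices
  have hxmem : ∀ k, x k ∈ X := by
    intro k
    rcases Nat.eq_zero_or_pos k with hk | hk
    · rw [hk]; exact hx0
    · exact hxX k hk
  -- continuity of F
  have Fcont : Continuous F :=
    continuous_iff_continuousAt.mpr fun y => (hF y).differentiableAt.continuousAt
  -- minimum of F on X
  obtain ⟨w, hwX, hwmin⟩ := hcomp.exists_isMinOn hX Fcont.continuousOn
  -- norm bound on X
  obtain ⟨R, hR⟩ := isBounded_iff_forall_norm_le.mp hcomp.isBounded
  -- gradient bound on X
  set G : ℝ := ‖Fgrad 0‖ + L * R with hGdef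
  have hGnn : 0 ≤ G := by
    obtain ⟨y, hy⟩ := hX
    have h1 := norm_nonneg (Fgrad 0)
    have h2 : (0:ℝ) ≤ ‖y‖ := norm_nonneg y
    have h3 := hR y hy
    nlinarith
  have hgradbound : ∀ y ∈ X, ‖Fgrad y‖ ≤ G := by
    intro y hy
    have h1 := norm_sub_norm_le (Fgrad y) (Fgrad 0)
    have h2 := hLip y 0
    rw [sub_zero] at h2
    have h3 : L * ‖y‖ ≤ L * R := by
      have := hR y hy; nlinarith
    rw [hGdef]; linarith
  -- step-size bound on the displacement
  have hinnerΔ : ∀ k, 1 ≤ k → ⟪h k, x k - x (k - 1)⟫ ≤ -((1 / (2 * α k)) * dd k ^ 2) := by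
    intro k hk
    have hm := hmin k hk (x (k - 1)) (hxmem (k - 1))
    simp only [sub_self, norm_zero, inner_zero_right] at hm
    rw [hdd]
    simp only []
    nlinarith [hm]
  have hdbound : ∀ k, 1 ≤ k → dd k ≤ 2 * α k * ‖h k‖ := by
    intro k hk
    have ha := hαpos k hk
    have hin := hinnerΔ k hk
    have hcs : -(‖h k‖ * ‖x k - x (k - 1)‖) ≤ ⟪h k, x k - x (k - 1)⟫ :=
      neg_le_of_neg_le (by
        have := abs_real_inner_le_norm (h k) (x k - x (k - 1))
        nlinarith [abs_nonneg (⟪h k, x k - x (k - 1)⟫ : ℝ), le_abs_self (⟪h k, x k - x (k - 1)⟫ : ℝ),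
          neg_abs_le (⟪h k, x k - x (k - 1)⟫ : ℝ)])
    have hkey : (1 / (2 * α k)) * dd k ^ 2 ≤ ‖h k‖ * dd k := by
      rw [hdd]; simp only []
      nlinarith [hin, hcs]
    rcases eq_or_lt_of_le (norm_nonneg (x k - x (k - 1))) with h0 | h0
    · have : dd k = 0 := h0.symm
      rw [this]; positivity
    · rw [one_div, inv_mul_eq_div, div_le_iff₀ (by positivity)] at hkey
      have : dd k * dd k ≤ (2 * α k * ‖h k‖) * dd k := by nlinarith [hkey]
      exact le_of_mul_le_mul_right this h0
  have hhbound : ∀ k, 1 ≤ k → ‖h k‖ ≤ G + ‖h k - Fgrad (x (k - 1))‖ := by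
    intro k hk
    have h1 : ‖h k‖ ≤ ‖h k - Fgrad (x (k - 1))‖ + ‖Fgrad (x (k - 1))‖ := by
      have := norm_sub_norm_le (h k) (Fgrad (x (k - 1)))
      linarith [abs_le.mp (abs_norm_sub_norm_le (h k) (Fgrad (x (k - 1))))]
    have h2 := hgradbound (x (k - 1)) (hxmem (k - 1))
    linarith
  -- descent inequality per step
  have hFdesc : ∀ k, 1 ≤ k → F (x k) ≤ F (x (k - 1)) - (1 / (2 * α k)) * dd k ^ 2
      + ‖h k - Fgrad (x (k - 1))‖ * dd k + L * dd k ^ 2 := by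
    intro k hk
    have hdes := stmt12_descent F Fgrad hF L hL.le hLip (x (k - 1)) (x k)
    have hsplit : ⟪Fgrad (x (k - 1)), x k - x (k - 1)⟫
        = ⟪h k, x k - x (k - 1)⟫ + ⟪Fgrad (x (k - 1)) - h k, x k - x (k - 1)⟫ := by
      rw [inner_sub_left]; ring
    have hcs2 : ⟪Fgrad (x (k - 1)) - h k, x k - x (k - 1)⟫
        ≤ ‖h k - Fgrad (x (k - 1))‖ * dd k := by
      have := real_inner_le_norm (Fgrad (x (k - 1)) - h k) (x k - x (k - 1))
      rw [norm_sub_rev] at this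
      exact this
    have hin := hinnerΔ k hk
    rw [hdd]; simp only []
    nlinarith [hdes, hsplit ▸ hdes, hcs2, hin]
  -- KEY CLAIM
  have key : ∀ ε : ℝ, 0 < ε → ∀ N : ℕ, ∃ k, N ≤ k ∧ 1 ≤ k ∧ dd k ≤ ε * α k := by
    intro ε hε N
    by_contra hcon
    push_neg at hcon
    -- hcon : ∀ k, N ≤ k → 1 ≤ k → ε * α k < dd k
    set M : ℝ := G + ε / 8 with hM
    have hM0 : 0 < M := by positivity
    have hev1 : ∀ᶠ k in atTop, ‖h k - Fgrad (x (k - 1))‖ ≤ ε / 8 :=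
      hherr.eventually (eventually_le_nhds (by positivity))
    have hev2 : ∀ᶠ k in atTop, α k ≤ ε / (16 * L * M) :=
      hα0.eventually (eventually_le_nhds (by positivity))
    obtain ⟨K0, hK0⟩ := eventually_atTop.mp (hev1.and hev2)
    set K : ℕ := max K0 (max N 1) with hKdef
    have hK1 : 1 ≤ K := le_trans (le_max_right N 1) (le_max_right K0 _)
    have hKN : N ≤ K := le_trans (le_max_left N 1) (le_max_right K0 _)
    have hKK0 : K0 ≤ K := le_max_left _ _
    -- single-step decrease
    have step : ∀ k, K ≤ k → F (x k) ≤ F (x (k - 1)) - ε ^ 2 / 4 * α k := by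
      intro k hk
      have hk1 : 1 ≤ k := le_trans hK1 hk
      have hkN : N ≤ k := le_trans hKN hk
      have ha := hαpos k hk1
      have ⟨he, hα⟩ := hK0 k (le_trans hKK0 hk)
      have hlt : ε * α k < dd k := hcon k hkN hk1
      have hd0 : 0 < dd k := lt_of_le_of_lt (by positivity) hlt
      have hdm : dd k ≤ 2 * α k * M := by
        refine (hdbound k hk1).trans ?_
        have := hhbound k hk1
        have : ‖h k‖ ≤ M := by rw [hM]; linarith
        nlinarith [ha.le]
      have f1 : ε / 2 * dd k ≤ (1 / (2 * α k)) * dd k ^ 2 := by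
        rw [one_div, inv_mul_eq_div, le_div_iff₀ (by positivity)]
        nlinarith [mul_pos hd0 (sub_pos.2 hlt)]
      have f2 : ‖h k - Fgrad (x (k - 1))‖ * dd k ≤ ε / 8 * dd k :=
        mul_le_mul_of_nonneg_right he hd0.le
      have f3 : L * dd k ^ 2 ≤ ε / 8 * dd k := by
        have hL' : 0 ≤ L := hL.le
        have hM' : 0 ≤ M := hM0.le
        have hLd : L * dd k ≤ ε / 8 := by
          calc L * dd k ≤ L * (2 * α k * M) := by gcongr
            _ ≤ L * (2 * (ε / (16 * L * M)) * M) := by gcongr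
            _ = ε / 8 := by field_simp; ring
        nlinarith [hd0.le]
      have f4 : ε / 4 * (ε * α k) ≤ ε / 4 * dd k := by nlinarith
      have := hFdesc k hk1
      nlinarith
    -- summed decrease
    have sumineq : ∀ m, K ≤ m →
        F (x m) + ε ^ 2 / 4 * (∑ k ∈ Finset.Ioc K m, α k) ≤ F (x K) := by
      intro m hm
      induction m with
      | zero =>
        have : K = 0 := Nat.le_zero.mp hm
        simp [this]
      | succ m ih =>
        rcases Nat.lt_or_ge m K with hmK | hmK
        · have : K = m + 1 := by omega
          simp [← this]
        · have hstep := step (m + 1) (by omega)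
          have hsum := Finset.sum_Ioc_succ_top hmK α
          have ihm := ih hmK
          have ha := hαpos (m + 1) (by omega)
          have : (m + 1 : ℕ) - 1 = m := by omega
          rw [this] at hstep
          rw [hsum]
          nlinarith [ihm, hstep, ha]
    -- contradiction with divergence
    have hbdd : ∀ m, K ≤ m → ε ^ 2 / 4 * (∑ k ∈ Finset.Ioc K m, α k) ≤ F (x K) - F w := by
      intro m hm
      have h1 := sumineq m hm
      have h2 : F w ≤ F (x m) := hwmin (hxmem m)
      linarith
    have hIoc : ∀ m, K ≤ m → (∑ k ∈ Finset.Ioc K m, α k)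
        = (∑ k ∈ Finset.Icc 1 m, α k) - ∑ k ∈ Finset.Icc 1 K, α k := by
      intro m hm
      have := Finset.sum_Ioc_consecutive α (Nat.zero_le K) hm
      rw [show (1:ℕ) = 0 + 1 from rfl, Finset.Icc_add_one_left_eq_Ioc, Finset.Icc_add_one_left_eq_Ioc]
      linarith
    set cK : ℝ := ∑ k ∈ Finset.Icc 1 K, α k with hcK
    have hdiv2 : Tendsto (fun m => (∑ k ∈ Finset.Icc 1 m, α k) - cK) atTop atTop := by
      simpa [sub_eq_add_neg] using tendsto_atTop_add_const_right atTop (-cK) hαdiv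
    have hdiv3 : Tendsto (fun m => ε ^ 2 / 4 * ((∑ k ∈ Finset.Icc 1 m, α k) - cK))
        atTop atTop := Tendsto.const_mul_atTop (by positivity) hdiv2
    obtain ⟨m, hm1, hm2⟩ :=
      ((hdiv3.eventually_gt_atTop (F (x K) - F w)).and (eventually_ge_atTop K)).exists
    have := hbdd m hm2
    rw [hIoc m hm2] at this
    linarith
  -- construct the subsequence with dd (σ j) ≤ α (σ j) / (j+1)
  obtain ⟨σ, hσmono, hσprop⟩ := extraction_forall_of_frequently
      (P := fun p k => 1 ≤ k ∧ dd k ≤ (1 / ((p : ℝ) + 1)) * α k)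
      (fun p => frequently_atTop.mpr (fun N => by
        obtain ⟨k, hk1, hk2, hk3⟩ := key (1 / ((p : ℝ) + 1)) (by positivity) N
        exact ⟨k, hk1, hk2, hk3⟩))
  have hσ1 : ∀ j, 1 ≤ σ j := fun j => (hσprop j).1
  have hσd : ∀ j, dd (σ j) ≤ (1 / ((j : ℝ) + 1)) * α (σ j) := fun j => (hσprop j).2
  -- compactness: convergent subsequence
  obtain ⟨xbar, hxbarX, ψ, hψmono, hψlim⟩ :=
    hcomp.tendsto_subseq (x := fun j => x (σ j)) (fun j => hxmem (σ j))
  refine ⟨σ ∘ ψ, hσmono.comp hψmono, xbar, hxbarX, hψlim, ?_⟩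
  -- limits
  have hφmono : StrictMono (σ ∘ ψ) := hσmono.comp hψmono
  have hφtop : Tendsto (fun j => σ (ψ j)) atTop atTop := hφmono.tendsto_atTop
  have hαφ : Tendsto (fun j => α (σ (ψ j))) atTop (𝓝 0) := hα0.comp hφtop
  have hΔ0 : Tendsto (fun j => x (σ (ψ j)) - x (σ (ψ j) - 1)) atTop (𝓝 0) := by
    apply squeeze_zero_norm (a := fun j => α (σ (ψ j))) ?_ hαφ
    intro j
    have h1 := hσd (ψ j)
    have ha := hαpos (σ (ψ j)) (hσ1 (ψ j))
    have h2 : (1 / ((ψ j : ℝ) + 1)) * α (σ (ψ j)) ≤ 1 * α (σ (ψ j)) := by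
      apply mul_le_mul_of_nonneg_right _ ha.le
      rw [div_le_one (by positivity)]
      linarith [(Nat.cast_nonneg (ψ j) : (0:ℝ) ≤ (ψ j : ℝ))]
    calc ‖x (σ (ψ j)) - x (σ (ψ j) - 1)‖ = dd (σ (ψ j)) := rfl
      _ ≤ (1 / ((ψ j : ℝ) + 1)) * α (σ (ψ j)) := h1
      _ ≤ 1 * α (σ (ψ j)) := h2
      _ = α (σ (ψ j)) := one_mul _
  have hprevlim : Tendsto (fun j => x (σ (ψ j) - 1)) atTop (𝓝 xbar) := by
    have := hψlim.sub hΔ0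
    rw [sub_zero] at this
    convert this using 2 with j
    simp only [Function.comp_apply]
    abel
  have hgradlim : Tendsto (fun j => Fgrad (x (σ (ψ j) - 1))) atTop (𝓝 (Fgrad xbar)) := by
    have hcont : Continuous Fgrad := by
      have : LipschitzWith (Real.toNNReal L) Fgrad := by
        apply LipschitzWith.of_dist_le_mul
        intro a b
        rw [dist_eq_norm, dist_eq_norm, Real.coe_toNNReal L hL.le]
        exact hLip a b
      exact this.continuous
    exact (hcont.tendsto xbar).comp hprevlim
  have hhlim : Tendsto (fun j => h (σ (ψ j))) atTop (𝓝 (Fgrad xbar)) := by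
    have herr0 : Tendsto (fun j => h (σ (ψ j)) - Fgrad (x (σ (ψ j) - 1))) atTop (𝓝 0) := by
      apply squeeze_zero_norm (a := fun j => ‖h (σ (ψ j)) - Fgrad (x (σ (ψ j) - 1))‖)
        (fun j => le_refl _)
      exact hherr.comp hφtop
    have := herr0.add hgradlim
    rw [zero_add] at this
    convert this using 2 with j
    abel
  have hsm0 : Tendsto (fun j => (α (σ (ψ j)))⁻¹ • (x (σ (ψ j)) - x (σ (ψ j) - 1)))
      atTop (𝓝 0) := by
    apply squeeze_zero_norm (a := fun j : ℕ => 1 / ((j : ℝ) + 1)) ?_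
      tendsto_one_div_add_atTop_nhds_zero_nat
    intro j
    have ha := hαpos (σ (ψ j)) (hσ1 (ψ j))
    have h1 := hσd (ψ j)
    rw [norm_smul, norm_inv, Real.norm_eq_abs, abs_of_pos ha]
    have hjψ : (j : ℝ) ≤ (ψ j : ℝ) := Nat.cast_le.mpr hψmono.le_apply
    calc (α (σ (ψ j)))⁻¹ * ‖x (σ (ψ j)) - x (σ (ψ j) - 1)‖
        = (α (σ (ψ j)))⁻¹ * dd (σ (ψ j)) := rfl
      _ ≤ (α (σ (ψ j)))⁻¹ * ((1 / ((ψ j : ℝ) + 1)) * α (σ (ψ j))) := by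
          apply mul_le_mul_of_nonneg_left h1 (by positivity)
      _ = 1 / ((ψ j : ℝ) + 1) := by field_simp
      _ ≤ 1 / ((j : ℝ) + 1) := by
          apply one_div_le_one_div_of_le (by positivity)
          linarith
  -- conclude stationarity
  intro z hz
  have hv : Tendsto (fun j => (α (σ (ψ j)))⁻¹ • (x (σ (ψ j)) - x (σ (ψ j) - 1)) + h (σ (ψ j)))
      atTop (𝓝 (Fgrad xbar)) := by
    have := hsm0.add hhlim
    rwa [zero_add] at this
  have hzlim : Tendsto (fun j => z - x (σ (ψ j))) atTop (𝓝 (z - xbar)) :=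
    tendsto_const_nhds.sub hψlim
  have hinnerlim : Tendsto (fun j => (⟪z - x (σ (ψ j)),
      (α (σ (ψ j)))⁻¹ • (x (σ (ψ j)) - x (σ (ψ j) - 1)) + h (σ (ψ j))⟫ : ℝ))
      atTop (𝓝 (⟪z - xbar, Fgrad xbar⟫ : ℝ)) := hzlim.inner hv
  refine ge_of_tendsto' hinnerlim (fun j => ?_)
  exact stmt12_VI X hconv (α (σ (ψ j))) (hαpos _ (hσ1 (ψ j))) (h (σ (ψ j)))
    (x (σ (ψ j) - 1)) (x (σ (ψ j))) (hxmem _) (hmin _ (hσ1 (ψ j))) z hz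
end

section
/- Let X ⊆ ℝ^n be a nonempty, compact, convex set and let F : ℝ^n → ℝ be convex and differentiable with gradient ∇F that is Lipschitz continuous with constant L > 0; write F* = min_{x∈X} F(x). Let (α_k)_{k≥1} be a positive, nonincreasing sequence with α_k → 0 and Σ_{k≥1} α_k = ∞, let (h^k)_{k≥1} be vectors in ℝ^n with ‖h^k − ∇F(x^{k−1})‖ → 0, and let (x^k)_{k≥0} with x^0 ∈ X be such that for every k ≥ 1, x^k ∈ X minimizes f̂^k(x) = (1/(2α_k))‖x − x^{k−1}‖² + ⟨h^k, x − x^{k−1}⟩ over x ∈ X. Then for every ε > 0 there exist ε′ > 0 and an index K such that for every k ≥ K with F(x^k) − F* ≥ ε, one has ‖x^k − x^{k−1}‖/α_k > ε′. -/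
open scoped RealInnerProductSpace
open Filter Topology


lemma aux1 (b c : ℝ) (H : ∀ t : ℝ, 0 < t → t ≤ 1 → 0 ≤ t * c + t^2 * b) : 0 ≤ c := by
  by_contra hc
  push_neg at hc
  rcases le_or_gt b 0 with hb | hb
  · nlinarith [H 1 one_pos le_rfl]
  · have htpos : 0 < min 1 (-c/(2*b)) := lt_min one_pos (div_pos (by linarith) (by positivity))
    have h1 := H _ htpos (min_le_left _ _)
    have h2' : min 1 (-c/(2*b)) * (2*b) ≤ -c :=
      (le_div_iff₀ (by positivity)).mp (min_le_right _ _)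
    nlinarith [mul_le_mul_of_nonneg_left h2' htpos.le, mul_pos htpos (neg_pos.mpr hc)]

lemma grad_ineq {n : ℕ} {F : EuclideanSpace ℝ (Fin n) → ℝ} (hFconv : ConvexOn ℝ Set.univ F)
    {g x y : EuclideanSpace ℝ (Fin n)}
    (hg : HasGradientAt F g x) : F x + ⟪g, y - x⟫ ≤ F y := by
  set φ : ℝ →ᵃ[ℝ] EuclideanSpace ℝ (Fin n) := AffineMap.lineMap x y with hφ
  have hconv2 : ConvexOn ℝ Set.univ (F ∘ φ) := by
    simpa using hFconv.comp_affineMap φ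
  have hderiv : HasDerivAt (F ∘ φ) ⟪g, y - x⟫ 0 := by
    have hφd : HasDerivAt (fun t : ℝ => φ t) (y - x) 0 := by
      simp only [hφ, AffineMap.lineMap_apply]
      simpa using ((hasDerivAt_id (0:ℝ)).smul_const (y - x)).add_const x
    have h00 : φ 0 = x := by simp [hφ]
    have := (h00 ▸ hg.hasFDerivAt).comp_hasDerivAt 0 (by simpa using hφd)
    simpa [InnerProductSpace.toDual_apply_apply] using this
  have := hconv2.le_slope_of_hasDerivAt (Set.mem_univ 0) (Set.mem_univ 1) one_pos hderiv
  rw [slope_def_field] at this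
  have hyx : y - x + x = y := by abel
  simp only [Function.comp, hφ, AffineMap.lineMap_apply, vsub_eq_sub, vadd_eq_add,
    zero_smul, one_smul, zero_add, sub_zero, div_one, hyx] at this
  linarith

set_option maxHeartbeats 1000000 in
/-- convex case lemma: with `F` convex and `F* = min_{x∈X} F = F(xm)`,
for every `ε > 0` there exist `ε′ > 0` and an index `K` such that every iterate
with `k ≥ K` lying outside the `ε`-sublevel region (`F(x^k) − F* ≥ ε`) satisfies
`‖x^k − x^{k−1}‖/α_k > ε′`. -/
theorem stmt13 (n : ℕ) (X : Set (EuclideanSpace ℝ (Fin n))) (hX : X.Nonempty)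
    (hcomp : IsCompact X) (hconv : Convex ℝ X)
    (F : EuclideanSpace ℝ (Fin n) → ℝ) (hFconv : ConvexOn ℝ Set.univ F)
    (Fgrad : EuclideanSpace ℝ (Fin n) → EuclideanSpace ℝ (Fin n))
    (hF : ∀ x, HasGradientAt F (Fgrad x) x)
    (L : ℝ) (hL : 0 < L)
    (hLip : ∀ x y, ‖Fgrad x - Fgrad y‖ ≤ L * ‖x - y‖)
    (xm : EuclideanSpace ℝ (Fin n)) (hxm : xm ∈ X)
    (hxmmin : ∀ z ∈ X, F xm ≤ F z)
    (α : ℕ → ℝ) (hαpos : ∀ k, 1 ≤ k → 0 < α k)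
    (hαmono : ∀ k, 1 ≤ k → α (k + 1) ≤ α k)
    (hα0 : Tendsto α atTop (𝓝 0))
    (hαdiv : Tendsto (fun m => ∑ k ∈ Finset.Icc 1 m, α k) atTop atTop)
    (h x : ℕ → EuclideanSpace ℝ (Fin n))
    (hherr : Tendsto (fun k => ‖h k - Fgrad (x (k - 1))‖) atTop (𝓝 0))
    (hx0 : x 0 ∈ X) (hxX : ∀ k, 1 ≤ k → x k ∈ X)
    (hmin : ∀ k, 1 ≤ k → ∀ z ∈ X,
      (1 / (2 * α k)) * ‖x k - x (k - 1)‖ ^ 2 + ⟪h k, x k - x (k - 1)⟫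
        ≤ (1 / (2 * α k)) * ‖z - x (k - 1)‖ ^ 2 + ⟪h k, z - x (k - 1)⟫) :
    ∀ ε > (0 : ℝ), ∃ ε' > (0 : ℝ), ∃ K : ℕ, ∀ k ≥ K,
      F (x k) - F xm ≥ ε → ‖x k - x (k - 1)‖ / α k > ε' := by
  obtain ⟨C, hC⟩ := Metric.isBounded_iff.mp hcomp.isBounded
  set D : ℝ := max C 1 with hDdef
  have hD : (0:ℝ) < D := lt_of_lt_of_le one_pos (le_max_right _ _)
  have hdiam : ∀ a ∈ X, ∀ b ∈ X, ‖a - b‖ ≤ D := by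
    intro a ha b hb
    rw [← dist_eq_norm]
    exact (hC ha hb).trans (le_max_left _ _)
  intro ε hε
  refine ⟨ε / (4 * D), by positivity, ?_⟩
  have E1 : ∀ᶠ k in atTop, ‖h k - Fgrad (x (k - 1))‖ < ε / (4 * D) :=
    hherr.eventually (eventually_lt_nhds (by positivity))
  have E2 : ∀ᶠ k in atTop, α k < 1 / L :=
    hα0.eventually (eventually_lt_nhds (by positivity))
  obtain ⟨K, hK⟩ := eventually_atTop.mp ((E1.and E2).and (eventually_ge_atTop 1))
  refine ⟨K, ?_⟩
  intro k hk hfar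
  obtain ⟨⟨he, hα1⟩, hk1⟩ := hK k hk
  have hαk : 0 < α k := hαpos k hk1
  set a : EuclideanSpace ℝ (Fin n) := x k - x (k - 1) with ha
  set u : EuclideanSpace ℝ (Fin n) := xm - x k with hu
  -- variational inequality
  have hVI : 0 ≤ (1 / α k) * ⟪a, u⟫ + ⟪h k, u⟫ := by
    apply aux1 (‖u‖ ^ 2 / (2 * α k))
    intro t ht0 ht1
    have hz : x k + t • u ∈ X := by
      have h2 := hconv (hxX k hk1) hxm (by linarith : (0:ℝ) ≤ 1 - t) ht0.le (by ring)
      have : x k + t • u = (1 - t) • x k + t • xm := by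
        rw [hu, smul_sub, sub_smul, one_smul]; abel
      rw [this]; exact h2
    have hm := hmin k hk1 _ hz
    have hexp : x k + t • u - x (k - 1) = a + t • u := by rw [ha]; abel
    rw [hexp] at hm
    have hnorm : ‖a + t • u‖ ^ 2 = ‖a‖ ^ 2 + 2 * (t * ⟪a, u⟫) + t ^ 2 * ‖u‖ ^ 2 := by
      rw [norm_add_sq_real, real_inner_smul_right, norm_smul, mul_pow, Real.norm_eq_abs, sq_abs]
    have hip : ⟪h k, a + t • u⟫ = ⟪h k, a⟫ + t * ⟪h k, u⟫ := by
      rw [inner_add_right, real_inner_smul_right]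
    rw [hnorm, hip] at hm
    have key : t * ((1 / α k) * ⟪a, u⟫ + ⟪h k, u⟫) + t ^ 2 * (‖u‖ ^ 2 / (2 * α k))
        = (1 / (2 * α k) * (‖a‖ ^ 2 + 2 * (t * ⟪a, u⟫) + t ^ 2 * ‖u‖ ^ 2)
            + (⟪h k, a⟫ + t * ⟪h k, u⟫))
          - (1 / (2 * α k) * ‖a‖ ^ 2 + ⟪h k, a⟫) := by
      field_simp
      ring
    rw [key]
    linarith
  -- convexity first-order inequality
  have hcx : F (x k) + ⟪Fgrad (x k), u⟫ ≤ F xm := grad_ineq hFconv (hF (x k))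
  -- bounds
  have huD : ‖u‖ ≤ D := hdiam _ hxm _ (hxX k hk1)
  have haD : ‖a‖ ≤ D := by
    rcases eq_or_lt_of_le hk1 with h1 | h1
    · exact hdiam _ (hxX k hk1) _ (by rw [← h1]; simpa using hx0)
    · exact hdiam _ (hxX k hk1) _ (hxX (k - 1) (by omega))
  have hCS1 : ⟪a, u⟫ ≤ ‖a‖ * ‖u‖ := real_inner_le_norm a u
  have hdec : -⟪Fgrad (x k), u⟫ = ⟪Fgrad (x k) - h k, -u⟫ + -⟪h k, u⟫ := by
    rw [inner_sub_left, inner_neg_right, inner_neg_right]; ring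
  have hCS2 : ⟪Fgrad (x k) - h k, -u⟫ ≤ ‖Fgrad (x k) - h k‖ * ‖u‖ := by
    have := real_inner_le_norm (Fgrad (x k) - h k) (-u)
    rwa [norm_neg] at this
  have htri : ‖Fgrad (x k) - h k‖ ≤ L * ‖a‖ + ‖h k - Fgrad (x (k - 1))‖ := by
    have h1 : Fgrad (x k) - h k = (Fgrad (x k) - Fgrad (x (k - 1))) - (h k - Fgrad (x (k - 1))) := by
      abel
    calc ‖Fgrad (x k) - h k‖
        ≤ ‖Fgrad (x k) - Fgrad (x (k - 1))‖ + ‖h k - Fgrad (x (k - 1))‖ := by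
          rw [h1]; exact norm_sub_le _ _
      _ ≤ L * ‖a‖ + ‖h k - Fgrad (x (k - 1))‖ := by
          have := hLip (x k) (x (k - 1)); rw [← ha] at this; linarith
  -- put it together
  set r : ℝ := ‖a‖ / α k with hr
  have hrnn : 0 ≤ r := div_nonneg (norm_nonneg a) hαk.le
  have hna : ‖a‖ = α k * r := by rw [hr]; field_simp
  have hLa : L * ‖a‖ ≤ r := by
    rw [hna]
    calc L * (α k * r) = (L * α k) * r := by ring
      _ ≤ 1 * r := by
          apply mul_le_mul_of_nonneg_right _ hrnn
          nlinarith [(lt_div_iff₀ hL).mp hα1]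
      _ = r := one_mul r
  have hmain : ε ≤ 2 * D * r + (ε / (4 * D)) * D := by
    have h0 : ε ≤ -⟪Fgrad (x k), u⟫ := by linarith [hfar, hcx]
    have h2 : -⟪h k, u⟫ ≤ (1 / α k) * ⟪a, u⟫ := by linarith [hVI]
    have h3 : (1 / α k) * ⟪a, u⟫ ≤ (1 / α k) * (‖a‖ * ‖u‖) := by
      apply mul_le_mul_of_nonneg_left hCS1 (by positivity)
    have h4 : (1 / α k) * (‖a‖ * ‖u‖) ≤ r * D := by
      rw [hna]
      have : 1 / α k * (α k * r * ‖u‖) = r * ‖u‖ := by field_simp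
      rw [this]
      exact mul_le_mul_of_nonneg_left huD hrnn
    have h5 : ‖Fgrad (x k) - h k‖ * ‖u‖ ≤ (r + ε / (4 * D)) * D := by
      apply mul_le_mul (by linarith [htri, hLa, he]) huD (norm_nonneg u) (by positivity)
    nlinarith [hdec, hCS2]
  have hfin : (ε / (4 * D)) * D = ε / 4 := by field_simp
  rw [hfin] at hmain
  rw [hr] at *
  rw [gt_iff_lt, div_lt_iff₀ (by positivity : (0:ℝ) < 4 * D)]
  nlinarith
end

section
/- Let X ⊆ ℝ^n be a nonempty, compact, convex set and let F : ℝ^n → ℝ be convex and differentiable with gradient ∇F that is Lipschitz continuous with constant L > 0; write F* = min_{x∈X} F(x). Let (α_k)_{k≥1} be a positive, nonincreasing sequence with α_k → 0 and Σ_{k≥1} α_k = ∞, let (h^k)_{k≥1} be vectors in ℝ^n with ‖h^k − ∇F(x^{k−1})‖ → 0, and let (x^k)_{k≥0} with x^0 ∈ X be such that for every k ≥ 1, x^k ∈ X minimizes f̂^k(x) = (1/(2α_k))‖x − x^{k−1}‖² + ⟨h^k, x − x^{k−1}⟩ over x ∈ X. Then for every ε > 0 there exists an index K such that for all k ≥ K: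 if F(x^k) − F* < ε then F(x^{k+1}) − F* < ε; that is, once the iterates enter the sublevel region {x ∈ X : F(x) − F* < ε} after iteration K, they never leave it. -/
open scoped RealInnerProductSpace
open Filter Topology

variable {E : Type*} [NormedAddCommGroup E] [InnerProductSpace ℝ E] [CompleteSpace E]

/-- Gradient inequality for convex functions. -/
lemma my_grad_convex_le {F : E → ℝ} (hFconv : ConvexOn ℝ Set.univ F)
    {g x : E} (hg : HasGradientAt F g x) (y : E) :
    ⟪g, y - x⟫ ≤ F y - F x := by
  set φ : ℝ → ℝ := fun t => F (x + t • (y - x)) with hφdef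
  have hline : HasDerivAt (fun t : ℝ => x + t • (y - x)) (y - x) 0 := by
    simpa using ((hasDerivAt_id (0 : ℝ)).smul_const (y - x)).const_add x
  have hφ : HasDerivAt φ ⟪g, y - x⟫ 0 := by
    have hgF : HasFDerivAt F (InnerProductSpace.toDual ℝ E g) (x + (0:ℝ) • (y - x)) := by
      simpa using hasGradientAt_iff_hasFDerivAt.mp hg
    have := hgF.comp_hasDerivAt (x := (0:ℝ)) hline
    simp [hφdef] at this; exact this
  have hkey : Tendsto (slope φ 0) (𝓝[>] 0) (𝓝 ⟪g, y - x⟫) :=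
    (hasDerivAt_iff_tendsto_slope.mp hφ).mono_left
      (nhdsWithin_mono _ (fun t ht => ne_of_gt ht))
  refine le_of_tendsto hkey ?_
  filter_upwards [Ioo_mem_nhdsGT zero_lt_one] with t ht
  have ht0 : (0:ℝ) < t := ht.1
  have ht1 : t < 1 := ht.2
  have hcomb : x + t • (y - x) = (1 - t) • x + t • y := by module
  have := hFconv.2 (Set.mem_univ x) (Set.mem_univ y)
    (by linarith : (0:ℝ) ≤ 1 - t) (le_of_lt ht0) (by ring)
  have hφt : φ t ≤ (1 - t) * F x + t * F y := by rw [hφdef]; simp only; rw [hcomb]; exact this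
  have hφ0 : φ 0 = F x := by simp [hφdef]
  have : slope φ 0 t = (φ t - F x) / t := by
    rw [slope_def_field, hφ0]; ring_nf
  rw [this, div_le_iff₀ ht0]
  nlinarith

/-- Descent lemma for functions with Lipschitz gradient. -/
lemma my_descent {F : E → ℝ} {g : E → E} (hF : ∀ x, HasGradientAt F (g x) x)
    {L : ℝ} (hL : 0 ≤ L) (hLip : ∀ x y, ‖g x - g y‖ ≤ L * ‖x - y‖) (x y : E) :
    F y ≤ F x + ⟪g x, y - x⟫ + L / 2 * ‖y - x‖ ^ 2 := by
  set v := y - x with hv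
  have hgcont : Continuous g := by
    have : LipschitzWith L.toNNReal g := by
      apply LipschitzWith.of_dist_le_mul
      intro p q
      rw [dist_eq_norm, dist_eq_norm, Real.coe_toNNReal L hL]
      exact hLip p q
    exact this.continuous
  have hlinec : Continuous (fun t : ℝ => x + t • v) := by continuity
  have hic : Continuous (fun t : ℝ => ⟪g (x + t • v), v⟫) :=
    (hgcont.comp hlinec).inner continuous_const
  have hd : ∀ t : ℝ, HasDerivAt (fun s : ℝ => F (x + s • v)) ⟪g (x + t • v), v⟫ t := by
    intro t
    have hline : HasDerivAt (fun s : ℝ => x + s • v) v t := by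
      simpa using ((hasDerivAt_id (t : ℝ)).smul_const v).const_add x
    have hgF : HasFDerivAt F (InnerProductSpace.toDual ℝ E (g (x + t • v))) (x + t • v) :=
      hasGradientAt_iff_hasFDerivAt.mp (hF _)
    have := hgF.comp_hasDerivAt (x := t) hline
    simp at this; exact this
  have hftc : F (x + (1:ℝ) • v) - F (x + (0:ℝ) • v)
      = ∫ t in (0:ℝ)..1, ⟪g (x + t • v), v⟫ := by
    exact (intervalIntegral.integral_eq_sub_of_hasDerivAt (fun t _ => hd t)
      (hic.intervalIntegrable 0 1)).symm
  have hmono : (∫ t in (0:ℝ)..1, ⟪g (x + t • v), v⟫)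
      ≤ ∫ t in (0:ℝ)..1, (⟪g x, v⟫ + L * ‖v‖ ^ 2 * t) := by
    apply intervalIntegral.integral_mono_on zero_le_one (hic.intervalIntegrable 0 1)
      ((by fun_prop : Continuous fun t : ℝ => ⟪g x, v⟫ + L * ‖v‖ ^ 2 * t).intervalIntegrable 0 1)
    intro t ht
    have h1 : ⟪g (x + t • v) - g x, v⟫ ≤ ‖g (x + t • v) - g x‖ * ‖v‖ :=
      real_inner_le_norm _ _
    have h2 : ‖g (x + t • v) - g x‖ ≤ L * (t * ‖v‖) := by
      have := hLip (x + t • v) x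
      simpa [norm_smul, abs_of_nonneg ht.1] using this
    have h3 : ⟪g (x + t • v) - g x, v⟫ ≤ L * ‖v‖ ^ 2 * t := by
      calc ⟪g (x + t • v) - g x, v⟫ ≤ ‖g (x + t • v) - g x‖ * ‖v‖ := h1
        _ ≤ L * (t * ‖v‖) * ‖v‖ := by
            apply mul_le_mul_of_nonneg_right h2 (norm_nonneg v)
        _ = L * ‖v‖ ^ 2 * t := by ring
    have := inner_sub_left (𝕜 := ℝ) (g (x + t • v)) (g x) v
    linarith [this ▸ h3]
  have hint : (∫ t in (0:ℝ)..1, (⟪g x, v⟫ + L * ‖v‖ ^ 2 * t))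
      = ⟪g x, v⟫ + L / 2 * ‖v‖ ^ 2 := by
    rw [intervalIntegral.integral_add (intervalIntegrable_const)
      ((by fun_prop : Continuous fun t : ℝ => L * ‖v‖ ^ 2 * t).intervalIntegrable 0 1)]
    rw [intervalIntegral.integral_const_mul, integral_id]; simp
    ring
  have h0 : x + (0:ℝ) • v = x := by simp
  have h1 : x + (1:ℝ) • v = y := by simp [hv]
  rw [h0, h1] at hftc
  linarith [hftc ▸ (hmono.trans_eq hint)]

lemma my_quad_bound {a e s L : ℝ} (ha : 0 < a) (he : 0 ≤ e) (hs : 0 ≤ s)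
    (hL2 : 2 * a * L ≤ 1) :
    -((1 / (2 * a)) * s ^ 2) + e * s + L / 2 * s ^ 2 ≤ a * e ^ 2 := by
  have hba : (1 / (2 * a)) * (2 * a) = 1 := by field_simp
  have h1 : 2 * a * L * s ^ 2 ≤ s ^ 2 := by nlinarith [sq_nonneg s]
  nlinarith [sq_nonneg (s - 2 * a * e), mul_pos ha ha, sq_nonneg s]

set_option maxHeartbeats 1000000 in
/-- sublevel-set invariance, convex case: for every `ε > 0` there is
an index `K` such that for all `k ≥ K`, once the iterates enter the sublevel region
`{x ∈ X : F(x) − F* < ε}` (with `F* = F(xm) = min_{x∈X} F`), they never leave it: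
`F(x^k) − F* < ε → F(x^{k+1}) − F* < ε`. -/
theorem stmt14 (n : ℕ) (X : Set (EuclideanSpace ℝ (Fin n))) (hX : X.Nonempty)
    (hcomp : IsCompact X) (hconv : Convex ℝ X)
    (F : EuclideanSpace ℝ (Fin n) → ℝ) (hFconv : ConvexOn ℝ Set.univ F)
    (Fgrad : EuclideanSpace ℝ (Fin n) → EuclideanSpace ℝ (Fin n))
    (hF : ∀ x, HasGradientAt F (Fgrad x) x)
    (L : ℝ) (hL : 0 < L)
    (hLip : ∀ x y, ‖Fgrad x - Fgrad y‖ ≤ L * ‖x - y‖)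
    (xm : EuclideanSpace ℝ (Fin n)) (hxm : xm ∈ X)
    (hxmmin : ∀ z ∈ X, F xm ≤ F z)
    (α : ℕ → ℝ) (hαpos : ∀ k, 1 ≤ k → 0 < α k)
    (hαmono : ∀ k, 1 ≤ k → α (k + 1) ≤ α k)
    (hα0 : Tendsto α atTop (𝓝 0))
    (hαdiv : Tendsto (fun m => ∑ k ∈ Finset.Icc 1 m, α k) atTop atTop)
    (h x : ℕ → EuclideanSpace ℝ (Fin n))
    (hherr : Tendsto (fun k => ‖h k - Fgrad (x (k - 1))‖) atTop (𝓝 0))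
    (hx0 : x 0 ∈ X) (hxX : ∀ k, 1 ≤ k → x k ∈ X)
    (hmin : ∀ k, 1 ≤ k → ∀ z ∈ X,
      (1 / (2 * α k)) * ‖x k - x (k - 1)‖ ^ 2 + ⟪h k, x k - x (k - 1)⟫
        ≤ (1 / (2 * α k)) * ‖z - x (k - 1)‖ ^ 2 + ⟪h k, z - x (k - 1)⟫) :
    ∀ ε > (0 : ℝ), ∃ K : ℕ, ∀ k ≥ K,
      F (x k) - F xm < ε → F (x (k + 1)) - F xm < ε := by
  intro ε hε
  have hxX' : ∀ k, x k ∈ X := by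
    intro k
    rcases Nat.eq_zero_or_pos k with rfl | hk
    · exact hx0
    · exact hxX k hk
  obtain ⟨D0, hD0⟩ := Metric.isBounded_iff.mp hcomp.isBounded
  set D := max D0 0 with hDdef
  have hDnn : 0 ≤ D := le_max_right _ _
  have hDdiam : ∀ p ∈ X, ∀ q ∈ X, ‖p - q‖ ≤ D := by
    intro p hp q hq
    rw [← dist_eq_norm]
    exact (hD0 hp hq).trans (le_max_left _ _)
  set β := min 1 (ε / (4 * (D ^ 2 + 1))) with hβdef
  have hβpos : 0 < β := lt_min one_pos (by positivity)
  have hβ1 : β ≤ 1 := min_le_left _ _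
  have hβD : β * D ^ 2 / 2 ≤ ε / 8 := by
    have h1 : β ≤ ε / (4 * (D ^ 2 + 1)) := min_le_right _ _
    have h2 : β * D ^ 2 ≤ ε / (4 * (D ^ 2 + 1)) * D ^ 2 :=
      mul_le_mul_of_nonneg_right h1 (by positivity)
    have h3 : ε / (4 * (D ^ 2 + 1)) * D ^ 2 ≤ ε / 4 := by
      rw [div_mul_eq_mul_div, div_le_div_iff₀ (by positivity) (by norm_num)]
      nlinarith
    linarith
  set δ := min 1 (β * ε / (8 * (D + 1))) with hδdef
  have hδpos : 0 < δ := lt_min one_pos (by positivity)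
  have hδ1 : δ ≤ 1 := min_le_left _ _
  have hδ2 : δ * (1 + D) ≤ β * ε / 8 := by
    have h1 : δ ≤ β * ε / (8 * (D + 1)) := min_le_right _ _
    have h2 : δ * (1 + D) ≤ β * ε / (8 * (D + 1)) * (1 + D) :=
      mul_le_mul_of_nonneg_right h1 (by linarith)
    have h3 : β * ε / (8 * (D + 1)) * (1 + D) = β * ε / 8 := by
      field_simp
      ring
    linarith
  have he : Tendsto (fun k => ‖h (k + 1) - Fgrad (x k)‖) atTop (𝓝 0) := by
    have := hherr.comp (tendsto_add_atTop_nat 1)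
    simpa [Function.comp_def] using this
  have hα' : Tendsto (fun k => α (k + 1)) atTop (𝓝 0) := hα0.comp (tendsto_add_atTop_nat 1)
  have hev1 : ∀ᶠ k in atTop, ‖h (k + 1) - Fgrad (x k)‖ < δ := he.eventually_lt_const hδpos
  have hev2 : ∀ᶠ k in atTop, α (k + 1) < min 1 (1 / (2 * L)) :=
    hα'.eventually_lt_const (lt_min one_pos (by positivity))
  obtain ⟨K, hK⟩ := eventually_atTop.mp (hev1.and hev2)
  refine ⟨K, ?_⟩
  intro k hk hsub
  obtain ⟨hek, hak⟩ := hK k hk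
  set a := α (k + 1) with hadef
  set e := ‖h (k + 1) - Fgrad (x k)‖ with hedef
  set d := x (k + 1) - x k with hddef
  set v := xm - x k with hvdef
  set t := a * β with htdef
  have hapos : 0 < a := hαpos (k + 1) (by omega)
  have ha1 : a ≤ 1 := (lt_of_lt_of_le hak (min_le_left _ _)).le
  have haL : a ≤ 1 / (2 * L) := (lt_of_lt_of_le hak (min_le_right _ _)).le
  have henn : 0 ≤ e := norm_nonneg _
  have ht0 : 0 < t := mul_pos hapos hβpos
  have ht1 : t ≤ 1 := by
    have : a * β ≤ 1 * 1 := mul_le_mul ha1 hβ1 hβpos.le zero_le_one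
    rw [htdef]
    linarith
  have hzX : x k + t • v ∈ X := by
    have hcomb : x k + t • v = (1 - t) • x k + t • xm := by rw [hvdef]; module
    rw [hcomb]
    exact hconv (hxX' k) hxm (by linarith) ht0.le (by ring)
  have hmin' : (1 / (2 * a)) * ‖d‖ ^ 2 + ⟪h (k + 1), d⟫
      ≤ (1 / (2 * a)) * ‖t • v‖ ^ 2 + ⟪h (k + 1), t • v⟫ := by
    have := hmin (k + 1) (by omega) (x k + t • v) hzX
    simpa [hddef, Nat.add_sub_cancel, add_sub_cancel_left] using this
  have hn1 : ‖t • v‖ ^ 2 = t ^ 2 * ‖v‖ ^ 2 := by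
    rw [norm_smul, Real.norm_eq_abs, abs_of_nonneg ht0.le, mul_pow]
  have hi1 : ⟪h (k + 1), t • v⟫ = t * ⟪h (k + 1), v⟫ := real_inner_smul_right _ _ _
  have hh1 : ⟪h (k + 1), d⟫
      ≤ -((1 / (2 * a)) * ‖d‖ ^ 2) + (1 / (2 * a)) * (t ^ 2 * ‖v‖ ^ 2)
        + t * ⟪h (k + 1), v⟫ := by
    rw [hn1, hi1] at hmin'
    linarith
  have hvD : ‖v‖ ≤ D := hDdiam xm hxm (x k) (hxX' k)
  have hvD2 : ‖v‖ ^ 2 ≤ D ^ 2 := pow_le_pow_left₀ (norm_nonneg v) hvD 2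
  have h2 : ⟪Fgrad (x k), v⟫ ≤ F xm - F (x k) := by
    have := my_grad_convex_le hFconv (hF (x k)) xm
    rw [← hvdef] at this
    exact this
  have h3 : ⟪h (k + 1), v⟫ ≤ (F xm - F (x k)) + e * D := by
    have hsplit : ⟪h (k + 1), v⟫ = ⟪Fgrad (x k), v⟫ + ⟪h (k + 1) - Fgrad (x k), v⟫ := by
      rw [inner_sub_left]
      ring
    have hcs : ⟪h (k + 1) - Fgrad (x k), v⟫ ≤ e * ‖v‖ := by
      rw [hedef]
      exact real_inner_le_norm _ _
    have hmul : e * ‖v‖ ≤ e * D := mul_le_mul_of_nonneg_left hvD henn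
    linarith
  have h4 : F (x (k + 1)) ≤ F (x k) + ⟪Fgrad (x k), d⟫ + L / 2 * ‖d‖ ^ 2 := by
    have := my_descent hF hL.le hLip (x k) (x (k + 1))
    rw [← hddef] at this
    exact this
  have h5 : ⟪Fgrad (x k), d⟫ ≤ ⟪h (k + 1), d⟫ + e * ‖d‖ := by
    have hsplit : ⟪Fgrad (x k), d⟫ = ⟪h (k + 1), d⟫ + ⟪Fgrad (x k) - h (k + 1), d⟫ := by
      rw [inner_sub_left]
      ring
    have hcs : ⟪Fgrad (x k) - h (k + 1), d⟫ ≤ ‖Fgrad (x k) - h (k + 1)‖ * ‖d‖ :=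
      real_inner_le_norm _ _
    have hnorm : ‖Fgrad (x k) - h (k + 1)‖ = e := by rw [hedef, norm_sub_rev]
    rw [hnorm] at hcs
    linarith
  have hquad : -((1 / (2 * a)) * ‖d‖ ^ 2) + e * ‖d‖ + L / 2 * ‖d‖ ^ 2 ≤ a * e ^ 2 := by
    have h2aL : 2 * a * L ≤ 1 := by
      rw [le_div_iff₀ (by positivity)] at haL
      linarith
    exact my_quad_bound hapos henn (norm_nonneg d) h2aL
  have hc1 : (1 / (2 * a)) * (t ^ 2 * ‖v‖ ^ 2) ≤ a * β ^ 2 * D ^ 2 / 2 := by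
    have heq : (1 / (2 * a)) * t ^ 2 = a * β ^ 2 / 2 := by
      rw [htdef]
      field_simp
    calc (1 / (2 * a)) * (t ^ 2 * ‖v‖ ^ 2) = ((1 / (2 * a)) * t ^ 2) * ‖v‖ ^ 2 := by ring
      _ ≤ (a * β ^ 2 / 2) * D ^ 2 := by
          rw [heq]
          exact mul_le_mul_of_nonneg_left hvD2 (by positivity)
      _ = a * β ^ 2 * D ^ 2 / 2 := by ring
  have hc2 : t * ⟪h (k + 1), v⟫ ≤ t * ((F xm - F (x k)) + e * D) :=
    mul_le_mul_of_nonneg_left h3 ht0.le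
  have hmaster : F (x (k + 1)) - F xm
      ≤ (F (x k) - F xm) + a * e ^ 2 + a * β ^ 2 * D ^ 2 / 2 + t * e * D
        - t * (F (x k) - F xm) := by linarith [h4, h5, hh1, hquad, hc1, hc2]
  have hP : 0 ≤ F (x k) - F xm := sub_nonneg.mpr (hxmmin _ (hxX' k))
  have heδ : e ≤ δ := hek.le
  have he2 : e ^ 2 + β * e * D ≤ β * ε / 8 := by
    have ha1' : e * e ≤ e * 1 := mul_le_mul_of_nonneg_left (heδ.trans hδ1) henn
    have ha2' : β * e * D ≤ 1 * e * D :=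
      mul_le_mul_of_nonneg_right (mul_le_mul_of_nonneg_right hβ1 henn) hDnn
    have hstep : e ^ 2 + β * e * D ≤ e * (1 + D) := by ring_nf at ha1' ha2' ⊢; linarith
    have hstep2 : e * (1 + D) ≤ δ * (1 + D) := mul_le_mul_of_nonneg_right heδ (by linarith)
    linarith
  have he3 : β ^ 2 * D ^ 2 / 2 ≤ β * ε / 8 := by
    have := mul_le_mul_of_nonneg_left hβD hβpos.le
    ring_nf at this ⊢
    linarith
  have hfin : a * e ^ 2 + a * β ^ 2 * D ^ 2 / 2 + t * e * D ≤ t * (ε / 4) := by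
    have hA : a * (e ^ 2 + β * e * D) ≤ a * (β * ε / 8) :=
      mul_le_mul_of_nonneg_left he2 hapos.le
    have hB : a * (β ^ 2 * D ^ 2 / 2) ≤ a * (β * ε / 8) :=
      mul_le_mul_of_nonneg_left he3 hapos.le
    rw [htdef]
    ring_nf at hA hB ⊢
    linarith
  have hprod1 : 0 ≤ (1 - t) * (ε - (F (x k) - F xm)) :=
    mul_nonneg (by linarith) (by linarith)
  have hprod2 : 0 < t * ε := mul_pos ht0 hε
  ring_nf at hmaster hfin hprod1 hprod2 ⊢
  linarith
end

section
/- Let X ⊆ ℝ^n be a nonempty, compact, convex set and let F : ℝ^n → ℝ be convex and differentiable with gradient ∇F that is Lipschitz continuous with constant L > 0; write F* = min_{x∈X} F(x). Let (α_k)_{k≥1} be a positive, nonincreasing sequence with α_k → 0 and Σ_{k≥1} α_k = ∞, let (h^k)_{k≥1} be vectors in ℝ^n with ‖h^k − ∇F(x^{k−1})‖ → 0, and let (x^k)_{k≥0} with x^0 ∈ X be such that for every k ≥ 1, x^k ∈ X minimizes f̂^k(x) = (1/(2α_k))‖x − x^{k−1}‖² + ⟨h^k, x − x^{k−1}⟩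 over x ∈ X. Then lim_{k→∞} F(x^k) = F*; in particular every limit point of (x^k) is a global minimizer of F over X. -/
open scoped RealInnerProductSpace
open Filter Topology

section Aux

variable {E : Type*} [NormedAddCommGroup E] [InnerProductSpace ℝ E]

/-- telescoping recursion -/
private lemma myTele {g β : ℕ → ℝ} {m : ℕ} : ∀ N, m ≤ N →
    (∀ k, m + 1 ≤ k → k ≤ N → g k ≤ g (k - 1) + β k) →
    g N ≤ g m + ∑ k ∈ Finset.Ioc m N, β k := by
  refine Nat.le_induction ?_ ?_
  · intro _; simp
  · intro N hmN ih hstep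
    have h1 := hstep (N + 1) (by omega) le_rfl
    simp only [Nat.add_sub_cancel] at h1
    have h2 := ih fun k hk1 hk2 => hstep k hk1 (by omega)
    rw [Finset.sum_Ioc_succ_top hmN]
    linarith

/-- strong form of the minimality (variational inequality consequence) -/
private lemma myVI {X : Set E} (hconv : Convex ℝ X) {αk : ℝ} (hαk : 0 < αk) (hv p : E) {y : E}
    (hy : y ∈ X)
    (hmin : ∀ z ∈ X, (1 / (2 * αk)) * ‖y - p‖ ^ 2 + ⟪hv, y - p⟫
      ≤ (1 / (2 * αk)) * ‖z - p‖ ^ 2 + ⟪hv, z - p⟫) :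
    ∀ z ∈ X, (1 / (2 * αk)) * ‖y - p‖ ^ 2 + ⟪hv, y - p⟫ + (1 / (2 * αk)) * ‖z - y‖ ^ 2
      ≤ (1 / (2 * αk)) * ‖z - p‖ ^ 2 + ⟪hv, z - p⟫ := by
  intro z hz
  set c : ℝ := 1 / (2 * αk) with hc
  have hcpos : 0 < c := by positivity
  set A : ℝ := 2 * c * ⟪y - p, z - y⟫ + ⟪hv, z - y⟫ with hA
  set B : ℝ := c * ‖z - y‖ ^ 2 with hB
  have key : ∀ t : ℝ, c * ‖(y + t • (z - y)) - p‖ ^ 2 + ⟪hv, (y + t • (z - y)) - p⟫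
      = (c * ‖y - p‖ ^ 2 + ⟪hv, y - p⟫) + t * A + t ^ 2 * B := by
    intro t
    have h1 : (y + t • (z - y)) - p = (y - p) + t • (z - y) := by abel
    rw [h1, norm_add_sq_real, inner_add_right, real_inner_smul_right, real_inner_smul_right,
      norm_smul]
    simp only [Real.norm_eq_abs, mul_pow, sq_abs, hA, hB]
    ring
  have hAB : ∀ t : ℝ, 0 ≤ t → t ≤ 1 → 0 ≤ t * A + t ^ 2 * B := by
    intro t ht0 ht1
    have hmem : y + t • (z - y) ∈ X := by
      have h2 : (1 - t) • y + t • z ∈ X := hconv hy hz (by linarith) ht0 (by ring)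
      have h3 : y + t • (z - y) = (1 - t) • y + t • z := by
        rw [smul_sub, sub_smul, one_smul]; abel
      rw [h3]; exact h2
    have h4 := hmin (y + t • (z - y)) hmem
    rw [key t] at h4
    linarith
  have hBnn : 0 ≤ B := by positivity
  have hA0 : 0 ≤ A := by
    by_contra hA0
    push_neg at hA0
    set t : ℝ := min 1 (-A / (2 * B + 1)) with ht
    have ht0 : 0 < t := lt_min one_pos (div_pos (by linarith) (by linarith))
    have h1 := hAB t ht0.le (min_le_left _ _)
    have h2 : t * (2 * B + 1) ≤ -A := by
      have h3 : t ≤ -A / (2 * B + 1) := min_le_right _ _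
      exact (le_div_iff₀ (by linarith)).1 h3
    nlinarith [mul_nonneg ht0.le hBnn, mul_le_mul_of_nonneg_left h2 ht0.le, sq_nonneg t]
  have hfin := key 1
  have h5 : y + (1:ℝ) • (z - y) = z := by simp
  rw [h5] at hfin
  linarith [hfin, hA0]

variable [CompleteSpace E]

/-- derivative of `t ↦ F (a + t • w)` -/
private lemma myHasDerivAt_line {F : E → ℝ} {Fgrad : E → E}
    (hF : ∀ x, HasGradientAt F (Fgrad x) x) (a w : E) (t : ℝ) :
    HasDerivAt (fun s : ℝ => F (a + s • w)) ⟪Fgrad (a + t • w), w⟫ t := by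
  have hline : HasDerivAt (fun s : ℝ => a + s • w) w t := by
    simpa using ((hasDerivAt_id t).smul_const w).const_add a
  have h2 := (hF (a + t • w)).hasFDerivAt.comp_hasDerivAt t hline
  simp only [InnerProductSpace.toDual_apply_apply] at h2; exact h2

/-- gradient inequality for convex functions -/
private lemma myGradConvex {F : E → ℝ} (hFconv : ConvexOn ℝ Set.univ F) {Fgrad : E → E}
    (hF : ∀ x, HasGradientAt F (Fgrad x) x) (a b : E) :
    ⟪Fgrad a, b - a⟫ ≤ F b - F a := by
  set G : ℝ → ℝ := fun t => F (a + t • (b - a)) with hG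
  have hGconv : ConvexOn ℝ Set.univ G := by
    have := hFconv.comp_affineMap (AffineMap.lineMap a b)
    have heq : G = F ∘ (AffineMap.lineMap a b : ℝ →ᵃ[ℝ] E) := by
      funext t
      simp [hG, AffineMap.lineMap_apply, add_comm]
    rw [heq]
    simpa using this
  have hd := myHasDerivAt_line hF a (b - a) 0
  have hslope := hGconv.le_slope_of_hasDerivAt (Set.mem_univ (0:ℝ)) (Set.mem_univ (1:ℝ))
    one_pos (by simpa using hd)
  have h0 : G 0 = F a := by simp [hG]
  have h1 : G 1 = F b := by simp [hG]
  simpa [slope_def_field, h0, h1] using hslope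

/-- descent lemma -/
private lemma myDescent {F : E → ℝ} {Fgrad : E → E}
    (hF : ∀ x, HasGradientAt F (Fgrad x) x) {L : ℝ} (hL : 0 < L)
    (hLip : ∀ x y, ‖Fgrad x - Fgrad y‖ ≤ L * ‖x - y‖) (a b : E) :
    F b ≤ F a + ⟪Fgrad a, b - a⟫ + L / 2 * ‖b - a‖ ^ 2 := by
  set w := b - a with hw
  set φ : ℝ → ℝ := fun t => F (a + t • w) - t * ⟪Fgrad a, w⟫ - L / 2 * ‖w‖ ^ 2 * t ^ 2 with hφ
  have hφ' : ∀ t : ℝ, HasDerivAt φ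
      (⟪Fgrad (a + t • w), w⟫ - ⟪Fgrad a, w⟫ - L * ‖w‖ ^ 2 * t) t := by
    intro t
    have h1 := myHasDerivAt_line hF a w t
    have h2 : HasDerivAt (fun s : ℝ => s * ⟪Fgrad a, w⟫) ⟪Fgrad a, w⟫ t := by
      simpa using (hasDerivAt_id t).mul_const ⟪Fgrad a, w⟫
    have h3 : HasDerivAt (fun s : ℝ => L / 2 * ‖w‖ ^ 2 * s ^ 2) (L * ‖w‖ ^ 2 * t) t := by
      have := (hasDerivAt_pow 2 t).const_mul (L / 2 * ‖w‖ ^ 2)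
      exact this.congr_deriv (by norm_num; ring)
    exact (h1.sub h2).sub h3
  have hanti : AntitoneOn φ (Set.Icc 0 1) := by
    apply antitoneOn_of_deriv_nonpos (convex_Icc 0 1)
    · exact fun t _ => ((hφ' t).continuousAt).continuousWithinAt
    · intro t _
      exact ((hφ' t).differentiableAt).differentiableWithinAt
    · intro t ht
      rw [interior_Icc] at ht
      rw [(hφ' t).deriv]
      have hsplit : ⟪Fgrad (a + t • w), w⟫ - ⟪Fgrad a, w⟫
          = ⟪Fgrad (a + t • w) - Fgrad a, w⟫ := by rw [inner_sub_left]
      have hb : ⟪Fgrad (a + t • w) - Fgrad a, w⟫ ≤ L * t * ‖w‖ ^ 2 := by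
        refine le_trans (real_inner_le_norm _ _) ?_
        have h4 : ‖Fgrad (a + t • w) - Fgrad a‖ ≤ L * (t * ‖w‖) := by
          have := hLip (a + t • w) a
          simpa [norm_smul, abs_of_pos ht.1] using this
        calc ‖Fgrad (a + t • w) - Fgrad a‖ * ‖w‖ ≤ (L * (t * ‖w‖)) * ‖w‖ :=
              mul_le_mul_of_nonneg_right h4 (norm_nonneg _)
          _ = L * t * ‖w‖ ^ 2 := by ring
      rw [hsplit]
      nlinarith [hb]
  have hle := hanti (Set.mem_Icc.2 ⟨le_refl (0:ℝ), zero_le_one⟩)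
    (Set.mem_Icc.2 ⟨zero_le_one, le_refl (1:ℝ)⟩) zero_le_one
  have h0 : φ 0 = F a := by simp [hφ]
  have hab : a + w = b := by simp [hw]
  have h1 : φ 1 = F b - ⟪Fgrad a, w⟫ - L / 2 * ‖w‖ ^ 2 := by simp [hφ, hab]
  rw [h0, h1] at hle
  linarith

end Aux

set_option maxHeartbeats 2000000 in
/-- convex-case convergence theorem: with `F` convex and
`F* = F(xm) = min_{x∈X} F`, the objective values of the iterates converge to the
optimum: `F(x^k) → F*` (so every limit point of `(x^k)` is a global minimizer of
`F` over `X`). -/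
theorem stmt15 (n : ℕ) (X : Set (EuclideanSpace ℝ (Fin n))) (hX : X.Nonempty)
    (hcomp : IsCompact X) (hconv : Convex ℝ X)
    (F : EuclideanSpace ℝ (Fin n) → ℝ) (hFconv : ConvexOn ℝ Set.univ F)
    (Fgrad : EuclideanSpace ℝ (Fin n) → EuclideanSpace ℝ (Fin n))
    (hF : ∀ x, HasGradientAt F (Fgrad x) x)
    (L : ℝ) (hL : 0 < L)
    (hLip : ∀ x y, ‖Fgrad x - Fgrad y‖ ≤ L * ‖x - y‖)
    (xm : EuclideanSpace ℝ (Fin n)) (hxm : xm ∈ X)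
    (hxmmin : ∀ z ∈ X, F xm ≤ F z)
    (α : ℕ → ℝ) (hαpos : ∀ k, 1 ≤ k → 0 < α k)
    (hαmono : ∀ k, 1 ≤ k → α (k + 1) ≤ α k)
    (hα0 : Tendsto α atTop (𝓝 0))
    (hαdiv : Tendsto (fun m => ∑ k ∈ Finset.Icc 1 m, α k) atTop atTop)
    (h x : ℕ → EuclideanSpace ℝ (Fin n))
    (hherr : Tendsto (fun k => ‖h k - Fgrad (x (k - 1))‖) atTop (𝓝 0))
    (hx0 : x 0 ∈ X) (hxX : ∀ k, 1 ≤ k → x k ∈ X)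
    (hmin : ∀ k, 1 ≤ k → ∀ z ∈ X,
      (1 / (2 * α k)) * ‖x k - x (k - 1)‖ ^ 2 + ⟪h k, x k - x (k - 1)⟫
        ≤ (1 / (2 * α k)) * ‖z - x (k - 1)‖ ^ 2 + ⟪h k, z - x (k - 1)⟫) :
    Tendsto (fun k => F (x k)) atTop (𝓝 (F xm)) := by
  classical
  -- boundedness of X
  obtain ⟨Cb, hCb⟩ := Metric.isBounded_iff.1 hcomp.isBounded
  set D : ℝ := |Cb| + 1 with hDdef
  have hD : 0 < D := by positivity
  have hDb : ∀ z ∈ X, ‖z - xm‖ ≤ D := by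
    intro z hz
    rw [← dist_eq_norm]
    calc dist z xm ≤ Cb := hCb hz hxm
      _ ≤ D := by rw [hDdef]; linarith [le_abs_self Cb]
  have hxXall : ∀ k, x k ∈ X := by
    intro k
    cases k with
    | zero => exact hx0
    | succ m => exact hxX _ (Nat.succ_le_succ (Nat.zero_le m))
  have hv0 : ∀ k, 0 ≤ F (x k) - F xm := fun k => sub_nonneg.2 (hxmmin _ (hxXall k))
  have hdD : ∀ k, ‖xm - x k‖ ^ 2 ≤ D ^ 2 := by
    intro k
    have h1 : ‖xm - x k‖ ≤ D := by rw [norm_sub_rev]; exact hDb _ (hxXall k)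
    nlinarith [norm_nonneg (xm - x k)]
  have hpX : ∀ k : ℕ, x (k - 1) ∈ X := fun k => hxXall (k - 1)
  -- key one-step estimate on the distance to the minimizer
  have hP4 : ∀ k, 1 ≤ k → α k * L ≤ 1 →
      ‖xm - x k‖ ^ 2 ≤ ‖xm - x (k - 1)‖ ^ 2 - 2 * α k * (F (x k) - F xm)
        + 2 * α k * (‖h k - Fgrad (x (k - 1))‖ * D) := by
    intro k hk hαL
    have hαk := hαpos k hk
    set p := x (k - 1) with hp
    have hyX : x k ∈ X := hxX k hk
    have hVIk := myVI hconv hαk (h k) p hyX (hmin k hk) xm hxm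
    have hsplit : ⟪h k, xm - p⟫ - ⟪h k, x k - p⟫ = ⟪h k, xm - x k⟫ := by
      rw [← inner_sub_right]; congr 1; abel
    have h6 : (1 / (2 * α k)) * (‖x k - p‖ ^ 2 + ‖xm - x k‖ ^ 2 - ‖xm - p‖ ^ 2)
        ≤ ⟪h k, xm - x k⟫ := by
      rw [← hsplit]
      nlinarith [hVIk]
    have h7 := mul_le_mul_of_nonneg_left h6 (by positivity : (0:ℝ) ≤ 2 * α k)
    have h8 : 2 * α k * ((1 / (2 * α k)) * (‖x k - p‖ ^ 2 + ‖xm - x k‖ ^ 2 - ‖xm - p‖ ^ 2))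
        = ‖x k - p‖ ^ 2 + ‖xm - x k‖ ^ 2 - ‖xm - p‖ ^ 2 := by
      field_simp
    rw [h8] at h7
    -- bound the inner product term
    have hb1 : ⟪Fgrad p, xm - p⟫ ≤ F xm - F p := myGradConvex hFconv hF p xm
    have hdes := myDescent hF hL hLip p (x k)
    have hb2 : ⟪Fgrad p, p - x k⟫ ≤ F p - F (x k) + L / 2 * ‖x k - p‖ ^ 2 := by
      have hneg : p - x k = -(x k - p) := by abel
      rw [hneg, inner_neg_right]
      linarith
    have hb3 : ⟪h k - Fgrad p, xm - x k⟫ ≤ ‖h k - Fgrad p‖ * D := by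
      refine le_trans (real_inner_le_norm _ _) ?_
      have h9 : ‖xm - x k‖ ≤ D := by rw [norm_sub_rev]; exact hDb _ hyX
      exact mul_le_mul_of_nonneg_left h9 (norm_nonneg _)
    have hsplit2 : ⟪h k, xm - x k⟫
        = ⟪Fgrad p, xm - p⟫ + ⟪Fgrad p, p - x k⟫ + ⟪h k - Fgrad p, xm - x k⟫ := by
      have he1 : ⟪h k - Fgrad p, xm - x k⟫ = ⟪h k, xm - x k⟫ - ⟪Fgrad p, xm - x k⟫ := by
        rw [inner_sub_left]
      have he2 : ⟪Fgrad p, xm - p⟫ + ⟪Fgrad p, p - x k⟫ = ⟪Fgrad p, xm - x k⟫ := by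
        rw [← inner_add_right]; congr 1; abel
      rw [he1, ← he2]; ring
    have h10 : ⟪h k, xm - x k⟫
        ≤ (F xm - F p) + (F p - F (x k) + L / 2 * ‖x k - p‖ ^ 2) + ‖h k - Fgrad p‖ * D := by
      rw [hsplit2]; exact add_le_add (add_le_add hb1 hb2) hb3
    have h11 := mul_le_mul_of_nonneg_left h10 (by positivity : (0:ℝ) ≤ 2 * α k)
    have hsq : (0:ℝ) ≤ (1 - α k * L) * ‖x k - p‖ ^ 2 :=
      mul_nonneg (by linarith) (sq_nonneg _)
    nlinarith [h7, h11, hsq]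
  -- key one-step estimate on the objective values
  have hP3 : ∀ k, 1 ≤ k → α k * L ≤ 1 / 2 →
      F (x k) - F xm ≤ (F (x (k - 1)) - F xm)
        + α k * ‖h k - Fgrad (x (k - 1))‖ ^ 2 := by
    intro k hk hαL
    have hαk := hαpos k hk
    set p := x (k - 1) with hp
    set t := ‖x k - p‖ with htdef
    set s := ‖h k - Fgrad p‖ with hsdef
    have hmin0 := hmin k hk p (hpX k)
    rw [sub_self] at hmin0
    simp only [norm_zero, inner_zero_right] at hmin0
    -- hmin0 : (1/(2 α k)) * t^2 + ⟪h k, x k - p⟫ ≤ 1/(2 α k) * 0 ^ 2 + 0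
    have hdes := myDescent hF hL hLip p (x k)
    have hCS : -(s * t) ≤ ⟪h k - Fgrad p, x k - p⟫ :=
      (abs_le.1 (abs_real_inner_le_norm _ _)).1
    have hgsplit : ⟪Fgrad p, x k - p⟫ = ⟪h k, x k - p⟫ - ⟪h k - Fgrad p, x k - p⟫ := by
      rw [inner_sub_left]; ring
    have hkey : F (x k) ≤ F p - (1 / (2 * α k)) * t ^ 2 + s * t + L / 2 * t ^ 2 := by
      rw [hgsplit] at hdes
      linarith [hmin0, hCS, hdes]
    have h2αk : (0:ℝ) < 2 * α k := by positivity
    have h12 := mul_le_mul_of_nonneg_left hkey h2αk.le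
    have hA : 2 * α k * (F p - (1 / (2 * α k)) * t ^ 2 + s * t + L / 2 * t ^ 2)
        = 2 * α k * F p - t ^ 2 + 2 * α k * s * t + α k * L * t ^ 2 := by
      field_simp
    rw [hA] at h12
    have h13 : α k * L * t ^ 2 ≤ 1 / 2 * t ^ 2 := mul_le_mul_of_nonneg_right hαL (sq_nonneg t)
    have h14 : 2 * α k * s * t ≤ t ^ 2 / 2 + 2 * α k ^ 2 * s ^ 2 := by
      nlinarith [sq_nonneg (t - 2 * α k * s)]
    have h15 : 2 * α k * F (x k) ≤ 2 * α k * (F p + α k * s ^ 2) := by nlinarith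
    have := (mul_le_mul_iff_right₀ h2αk).1 h15
    linarith
  -- reduce to: objective gaps become eventually small
  suffices hS : ∀ ε : ℝ, 0 < ε → ∀ᶠ k in atTop, F (x k) - F xm < ε by
    have hT : Tendsto (fun k => F (x k) - F xm) atTop (𝓝 0) := by
      refine tendsto_order.2 ⟨fun c hc => ?_, fun c hc => hS c hc⟩
      exact Eventually.of_forall fun k => lt_of_lt_of_le hc (hv0 k)
    simpa using hT.add_const (F xm)
  intro ε hε
  by_contra hcon
  rw [Filter.not_eventually] at hcon
  replace hcon : ∃ᶠ k in atTop, ε ≤ F (x k) - F xm := hcon.mono fun k hk => not_lt.1 hk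
  set γ : ℝ := ε / 3 with hγdef
  have hγ : 0 < γ := by positivity
  -- eventual smallness conditions
  have heα : ∀ᶠ k in atTop, α k * L ≤ 1 / 2 := by
    have h1 := hα0.eventually_lt_const (show (0:ℝ) < 1 / (2 * L) by positivity)
    filter_upwards [h1] with k hk1
    have h2 : α k * L ≤ (1 / (2 * L)) * L := mul_le_mul_of_nonneg_right hk1.le hL.le
    calc α k * L ≤ (1 / (2 * L)) * L := h2
      _ = 1 / 2 := by field_simp
  have he1 : ∀ᶠ k in atTop, ‖h k - Fgrad (x (k - 1))‖ * D ≤ γ / 2 := by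
    have h1 := hherr.eventually_le_const (show (0:ℝ) < γ / (2 * D) by positivity)
    filter_upwards [h1] with k hk1
    calc ‖h k - Fgrad (x (k - 1))‖ * D ≤ (γ / (2 * D)) * D :=
          mul_le_mul_of_nonneg_right hk1 hD.le
      _ = γ / 2 := by field_simp
  have he2 : ∀ᶠ k in atTop, ‖h k - Fgrad (x (k - 1))‖ ^ 2 ≤ γ ^ 2 / (D ^ 2 + 1) := by
    have h1 := hherr.eventually_le_const (show (0:ℝ) < γ / (D + 1) by positivity)
    filter_upwards [h1] with k hk1
    have h2 : ‖h k - Fgrad (x (k - 1))‖ ^ 2 ≤ (γ / (D + 1)) ^ 2 := by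
      have := norm_nonneg (h k - Fgrad (x (k - 1)))
      nlinarith
    refine le_trans h2 ?_
    rw [div_pow]
    apply div_le_div_of_nonneg_left (sq_nonneg γ) (by positivity)
    nlinarith
  have he3 : ∀ᶠ k in atTop, α k * ‖h k - Fgrad (x (k - 1))‖ ^ 2 ≤ γ := by
    have hprod : Tendsto (fun k => α k * ‖h k - Fgrad (x (k - 1))‖ ^ 2) atTop (𝓝 0) := by
      have h1 := hα0.mul (hherr.mul hherr)
      norm_num at h1
      simpa [pow_two] using h1
    exact hprod.eventually_le_const hγ
  obtain ⟨K, hK⟩ := eventually_atTop.1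
    (((heα.and (he1.and (he2.and he3))).and (eventually_ge_atTop 1)))
  have hC1 : ∀ k, K ≤ k → α k * L ≤ 1 / 2 := fun k hk => (hK k hk).1.1
  have hC2 : ∀ k, K ≤ k → ‖h k - Fgrad (x (k - 1))‖ * D ≤ γ / 2 :=
    fun k hk => (hK k hk).1.2.1
  have hC3 : ∀ k, K ≤ k → ‖h k - Fgrad (x (k - 1))‖ ^ 2 ≤ γ ^ 2 / (D ^ 2 + 1) :=
    fun k hk => (hK k hk).1.2.2.1
  have hC4 : ∀ k, K ≤ k → α k * ‖h k - Fgrad (x (k - 1))‖ ^ 2 ≤ γ :=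
    fun k hk => (hK k hk).1.2.2.2
  have hCk1 : ∀ k, K ≤ k → 1 ≤ k := fun k hk => (hK k hk).2
  -- drop step : whenever the gap is at least γ, the distance decreases
  have hdrop : ∀ k, K ≤ k → γ ≤ F (x k) - F xm →
      ‖xm - x k‖ ^ 2 ≤ ‖xm - x (k - 1)‖ ^ 2 + -(α k * γ) := by
    intro k hk hvk
    have h1 := hP4 k (hCk1 k hk) (by linarith [hC1 k hk])
    have hα := hαpos k (hCk1 k hk)
    have h2 := hC2 k hk
    nlinarith [mul_le_mul_of_nonneg_left hvk hα.le, mul_le_mul_of_nonneg_left h2 hα.le]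
  -- climb step : the gap increases slowly
  have hclimb : ∀ k, K ≤ k →
      F (x k) - F xm ≤ (F (x (k - 1)) - F xm) + α k * (γ ^ 2 / (D ^ 2 + 1)) := by
    intro k hk
    have h1 := hP3 k (hCk1 k hk) (hC1 k hk)
    have h3 := hC3 k hk
    have hα := (hαpos k (hCk1 k hk)).le
    nlinarith [mul_le_mul_of_nonneg_left h3 hα]
  -- step 1 : some iterate beyond K has gap below γ
  have hstep1 : ∃ a, K ≤ a ∧ F (x a) - F xm < γ := by
    by_contra hno
    push_neg at hno
    have hsum := hαdiv.eventually_ge_atTop ((∑ k ∈ Finset.Icc 1 K, α k) + (D ^ 2 + 1) / γ)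
    obtain ⟨N, hNK, hNsum⟩ := ((eventually_ge_atTop K).and hsum).exists
    have htel := myTele (g := fun k => ‖xm - x k‖ ^ 2) (β := fun k => -(α k * γ)) (m := K)
      N hNK (fun k hk1 _ => hdrop k (by omega) (hno k (by omega)))
    have hIccIoc : ∀ m : ℕ, Finset.Icc 1 m = Finset.Ioc 0 m := fun m => Finset.Icc_add_one_left_eq_Ioc 0 m
    have hsplitsum : ∑ k ∈ Finset.Icc 1 N, α k
        = ∑ k ∈ Finset.Icc 1 K, α k + ∑ k ∈ Finset.Ioc K N, α k := by
      rw [hIccIoc, hIccIoc, Finset.sum_Ioc_consecutive _ (Nat.zero_le K) hNK]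
    have hsum2 : (D ^ 2 + 1) / γ ≤ ∑ k ∈ Finset.Ioc K N, α k := by linarith
    have hmsum : ∑ k ∈ Finset.Ioc K N, -(α k * γ) = -((∑ k ∈ Finset.Ioc K N, α k) * γ) := by
      rw [Finset.sum_neg_distrib, ← Finset.sum_mul]
    rw [hmsum] at htel
    have h30 := mul_le_mul_of_nonneg_right hsum2 hγ.le
    have h31 : (D ^ 2 + 1) / γ * γ = D ^ 2 + 1 := by field_simp
    rw [h31] at h30
    have h32 := hdD K
    have h33 := sq_nonneg ‖xm - x N‖
    linarith
  obtain ⟨a, haK, hva⟩ := hstep1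
  -- a later iterate with large gap
  obtain ⟨b, hba, hvb⟩ := frequently_atTop.1 hcon (a + 1)
  have hε3 : ε = 3 * γ := by rw [hγdef]; ring
  rw [hε3] at hvb
  -- the last time before b the gap was below γ
  set P : ℕ → Prop := fun j => a ≤ j ∧ F (x j) - F xm < γ with hPdef
  have hab1 : a ≤ b - 1 := by omega
  have hPa : P a := ⟨le_rfl, hva⟩
  set a' := Nat.findGreatest P (b - 1) with ha'def
  have ha'P : P a' := Nat.findGreatest_spec hab1 hPa
  have ha'a : a ≤ a' := ha'P.1
  have ha'K : K ≤ a' := le_trans haK ha'a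
  have ha'le : a' ≤ b - 1 := Nat.findGreatest_le _
  have hhigh : ∀ j, a' < j → j ≤ b → γ ≤ F (x j) - F xm := by
    intro j hj1 hj2
    by_contra hlt
    push_neg at hlt
    rcases eq_or_lt_of_le hj2 with rfl | hjb
    · linarith
    · have hjb1 : j ≤ b - 1 := by omega
      have : j ≤ a' := Nat.le_findGreatest hjb1 ⟨by omega, hlt⟩
      omega
  -- the gap just after a' is below 2γ
  have hjump : F (x (a' + 1)) - F xm < 2 * γ := by
    have h1 := hP3 (a' + 1) (by omega) (hC1 _ (by omega))
    have h4 := hC4 (a' + 1) (by omega)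
    simp only [Nat.add_sub_cancel] at h1 h4
    have := ha'P.2
    linarith
  have hb2 : a' + 2 ≤ b := by
    by_contra hc2
    have hbeq : b = a' + 1 := by omega
    rw [hbeq] at hvb
    linarith
  -- climb telescoping
  have htc := myTele (g := fun k => F (x k) - F xm) (β := fun k => α k * (γ ^ 2 / (D ^ 2 + 1)))
    (m := a' + 1) b (by omega) (fun k hk1 _ => hclimb k (by omega))
  set S : ℝ := ∑ k ∈ Finset.Ioc (a' + 1) b, α k with hSdef
  have hcsum : ∑ k ∈ Finset.Ioc (a' + 1) b, α k * (γ ^ 2 / (D ^ 2 + 1))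
      = S * (γ ^ 2 / (D ^ 2 + 1)) := by
    rw [hSdef, Finset.sum_mul]
  rw [hcsum] at htc
  have h20 : γ < S * (γ ^ 2 / (D ^ 2 + 1)) := by linarith
  have h21 : D ^ 2 + 1 < γ * S := by
    have h22 := mul_lt_mul_of_pos_right h20 (show (0:ℝ) < D ^ 2 + 1 by positivity)
    have h23 : S * (γ ^ 2 / (D ^ 2 + 1)) * (D ^ 2 + 1) = S * γ ^ 2 := by field_simp
    rw [h23] at h22
    nlinarith [h22, hγ]
  -- drop telescoping
  have htd := myTele (g := fun k => ‖xm - x k‖ ^ 2) (β := fun k => -(α k * γ))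
    (m := a' + 1) b (by omega) (fun k hk1 hk2 => hdrop k (by omega) (hhigh k (by omega) hk2))
  have hmsum : ∑ k ∈ Finset.Ioc (a' + 1) b, -(α k * γ) = -(S * γ) := by
    rw [Finset.sum_neg_distrib, ← Finset.sum_mul, hSdef]
  rw [hmsum] at htd
  have h32 := hdD (a' + 1)
  have h33 := sq_nonneg ‖xm - x b‖
  nlinarith [htd, h21, h32, h33]
end

section
/- Let X ⊆ ℝ^n be a nonempty, compact, convex set and let F : ℝ^n → ℝ be differentiable with gradient ∇F that is Lipschitz continuous with constant L > 0. Let (α_k)_{k≥1} be a positive, nonincreasing sequence with α_k → 0 and Σ_{k≥1} α_k = ∞, let (h^k)_{k≥1} be vectors in ℝ^n with ‖h^k − ∇F(x^{k−1})‖ → 0, and let (x^k)_{k≥0} with x^0 ∈ X be such that for every k ≥ 1, x^k ∈ X minimizes f̂^k(x) = (1/(2α_k))‖x − x^{k−1}‖² + ⟨h^k, x − x^{k−1}⟩ over x ∈ X. Let x̄* ∈ X and ε > 0 be such that x̄* is the unique stationary point of min_{x∈X} F(x) contained in the closed ball B(x̄*, ε). Then there exist ε″ > 0 and an index K such that for every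 k ≥ K with x^k ∈ B(x̄*, ε) and F(x^k) − F(x̄*) ≥ ε, one has ‖x^k − x^{k−1}‖/α_k > ε″. -/
open scoped RealInnerProductSpace
open Filter Topology

private lemma nonneg_of_forall_aux (A c : ℝ) (hc : 0 ≤ c)
    (h : ∀ t : ℝ, 0 < t → t ≤ 1 → 0 ≤ A + t * c) : 0 ≤ A := by
  by_contra hA
  push_neg at hA
  rcases eq_or_lt_of_le hc with hc0 | hc0
  · have := h 1 one_pos le_rfl
    rw [← hc0] at this
    linarith
  · set t := min 1 (-A / (2 * c)) with ht_def
    have hA' : 0 < -A := by linarith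
    have ht : 0 < t := lt_min one_pos (div_pos hA' (by linarith))
    have h1 := h t ht (min_le_left _ _)
    have htle : t * c ≤ (-A / (2 * c)) * c :=
      mul_le_mul_of_nonneg_right (min_le_right _ _) hc
    have heq : (-A / (2 * c)) * c = -A / 2 := by
      field_simp
    linarith

private lemma vi_lemma {E : Type*} [NormedAddCommGroup E] [InnerProductSpace ℝ E]
    {X : Set E} (hconv : Convex ℝ X) {u p hvec : E} (hu : u ∈ X) {a : ℝ} (ha : 0 < a)
    (hmin : ∀ z ∈ X, (1 / (2 * a)) * ‖u - p‖ ^ 2 + ⟪hvec, u - p⟫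
        ≤ (1 / (2 * a)) * ‖z - p‖ ^ 2 + ⟪hvec, z - p⟫) :
    ∀ v ∈ X, 0 ≤ ⟪u - p, v - u⟫ / a + ⟪hvec, v - u⟫ := by
  intro v hv
  have hc : (0:ℝ) ≤ ‖v - u‖ ^ 2 / (2 * a) := by positivity
  refine nonneg_of_forall_aux _ _ hc ?_
  intro t ht ht1
  have hmem : u + t • (v - u) ∈ X := by
    have hco : (1 - t) • u + t • v = u + t • (v - u) := by
      rw [sub_smul, one_smul, smul_sub]; abel
    rw [← hco]
    exact hconv hu hv (by linarith) ht.le (by ring)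
  have h2 := hmin _ hmem
  have hrearr : u + t • (v - u) - p = (u - p) + t • (v - u) := by abel
  have hexp : ‖u + t • (v - u) - p‖ ^ 2
      = ‖u - p‖ ^ 2 + 2 * (t * ⟪u - p, v - u⟫) + t ^ 2 * ‖v - u‖ ^ 2 := by
    rw [hrearr, norm_add_sq_real, real_inner_smul_right, norm_smul, Real.norm_eq_abs,
      mul_pow, sq_abs]
  have hexp2 : ⟪hvec, u + t • (v - u) - p⟫ = ⟪hvec, u - p⟫ + t * ⟪hvec, v - u⟫ := by
    rw [hrearr, inner_add_right, real_inner_smul_right]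
  rw [hexp, hexp2] at h2
  have ha' : a ≠ 0 := ha.ne'
  have h3 : 0 ≤ t * (⟪u - p, v - u⟫ / a + ⟪hvec, v - u⟫ + t * (‖v - u‖ ^ 2 / (2 * a))) := by
    have hkey : t * (⟪u - p, v - u⟫ / a + ⟪hvec, v - u⟫ + t * (‖v - u‖ ^ 2 / (2 * a)))
        = 1 / (2 * a) * (2 * (t * ⟪u - p, v - u⟫) + t ^ 2 * ‖v - u‖ ^ 2)
          + t * ⟪hvec, v - u⟫ := by
      field_simp
      ring
    rw [hkey]
    linarith
  nlinarith [h3, ht]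

set_option maxHeartbeats 1000000 in
/-- non-convex case lemma: if `x̄*` is the unique stationary point of
`min_{x∈X} F` contained in the closed ball `B(x̄*, ε)`, then there exist `ε″ > 0`
and an index `K` such that every iterate with `k ≥ K` lying in `B(x̄*, ε)` with
`F(x^k) − F(x̄*) ≥ ε` satisfies `‖x^k − x^{k−1}‖/α_k > ε″`. -/
theorem stmt16 (n : ℕ) (X : Set (EuclideanSpace ℝ (Fin n))) (hX : X.Nonempty)
    (hcomp : IsCompact X) (hconv : Convex ℝ X)
    (F : EuclideanSpace ℝ (Fin n) → ℝ)
    (Fgrad : EuclideanSpace ℝ (Fin n) → EuclideanSpace ℝ (Fin n))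
    (hF : ∀ x, HasGradientAt F (Fgrad x) x)
    (L : ℝ) (hL : 0 < L)
    (hLip : ∀ x y, ‖Fgrad x - Fgrad y‖ ≤ L * ‖x - y‖)
    (α : ℕ → ℝ) (hαpos : ∀ k, 1 ≤ k → 0 < α k)
    (hαmono : ∀ k, 1 ≤ k → α (k + 1) ≤ α k)
    (hα0 : Tendsto α atTop (𝓝 0))
    (hαdiv : Tendsto (fun m => ∑ k ∈ Finset.Icc 1 m, α k) atTop atTop)
    (h x : ℕ → EuclideanSpace ℝ (Fin n))
    (hherr : Tendsto (fun k => ‖h k - Fgrad (x (k - 1))‖) atTop (𝓝 0))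
    (hx0 : x 0 ∈ X) (hxX : ∀ k, 1 ≤ k → x k ∈ X)
    (hmin : ∀ k, 1 ≤ k → ∀ z ∈ X,
      (1 / (2 * α k)) * ‖x k - x (k - 1)‖ ^ 2 + ⟪h k, x k - x (k - 1)⟫
        ≤ (1 / (2 * α k)) * ‖z - x (k - 1)‖ ^ 2 + ⟪h k, z - x (k - 1)⟫)
    (xbar : EuclideanSpace ℝ (Fin n)) (hxbar : xbar ∈ X)
    (ε : ℝ) (hε : 0 < ε)
    (hstat : ∀ z ∈ X, ⟪z - xbar, Fgrad xbar⟫ ≥ 0)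
    (huniq : ∀ y ∈ X, y ∈ Metric.closedBall xbar ε →
      (∀ z ∈ X, ⟪z - y, Fgrad y⟫ ≥ 0) → y = xbar) :
    ∃ ε'' > (0 : ℝ), ∃ K : ℕ, ∀ k ≥ K,
      x k ∈ Metric.closedBall xbar ε → F (x k) - F xbar ≥ ε →
        ‖x k - x (k - 1)‖ / α k > ε'' := by
  classical
  -- continuity of the gradient
  have hFg_cont : Continuous Fgrad := by
    have hlw : LipschitzWith (Real.toNNReal L) Fgrad := by
      apply LipschitzWith.of_dist_le_mul
      intro a b
      rw [dist_eq_norm, dist_eq_norm]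
      calc ‖Fgrad a - Fgrad b‖ ≤ L * ‖a - b‖ := hLip a b
        _ = (Real.toNNReal L : ℝ) * ‖a - b‖ := by rw [Real.coe_toNNReal _ hL.le]
    exact hlw.continuous
  -- continuity of F
  have hF_cont : Continuous F := by
    rw [continuous_iff_continuousAt]
    exact fun y => (hF y).hasFDerivAt.differentiableAt.continuousAt
  -- diameter bound
  obtain ⟨C, hC⟩ := Metric.isBounded_iff.mp hcomp.isBounded
  set D : ℝ := max C 1 with hD_def
  have hDpos : (0:ℝ) < D := lt_of_lt_of_le one_pos (le_max_right _ _)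
  have hDbound : ∀ a ∈ X, ∀ b ∈ X, ‖a - b‖ ≤ D := by
    intro a ha b hb
    rw [← dist_eq_norm]
    exact (hC ha hb).trans (le_max_left _ _)
  -- the compact set S
  set S : Set (EuclideanSpace ℝ (Fin n)) :=
    X ∩ Metric.closedBall xbar ε ∩ {y | ε ≤ F y - F xbar} with hS_def
  have hScomp : IsCompact S :=
    (hcomp.inter_right Metric.isClosed_closedBall).inter_right
      (isClosed_le continuous_const (hF_cont.sub continuous_const))
  -- every point of S is non-stationary
  have hns : ∀ w ∈ S, ∃ z ∈ X, ⟪z - w, Fgrad w⟫ < 0 := by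
    intro w hw
    by_contra hcon
    push_neg at hcon
    have hw_eq : w = xbar := huniq w hw.1.1 hw.1.2 (fun z hz => hcon z hz)
    have : ε ≤ F w - F xbar := hw.2
    rw [hw_eq] at this
    simp at this
    linarith
  -- uniform stationarity gap on S
  have key : ∃ δ > (0:ℝ), ∀ w ∈ S, ∃ z ∈ X, ⟪z - w, Fgrad w⟫ ≤ -δ := by
    rcases S.eq_empty_or_nonempty with hSe | hSne
    · refine ⟨1, one_pos, ?_⟩
      intro w hw
      rw [hSe] at hw
      exact absurd hw (Set.notMem_empty w)
    · choose! z hzX hzlt using hns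
      set g : EuclideanSpace ℝ (Fin n) → EuclideanSpace ℝ (Fin n) → ℝ :=
        fun w v => ⟪z w - v, Fgrad v⟫ with hg_def
      have hgc : ∀ w, Continuous (g w) :=
        fun w => (continuous_const.sub continuous_id).inner hFg_cont
      set U : EuclideanSpace ℝ (Fin n) → Set (EuclideanSpace ℝ (Fin n)) :=
        fun w => {v | g w v < g w w / 2} with hU_def
      have hUo : ∀ w ∈ S, IsOpen (U w) := fun w _ => isOpen_lt (hgc w) continuous_const
      have hcover : S ⊆ ⋃ w ∈ S, U w := by
        intro v hv
        refine Set.mem_biUnion hv ?_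
        have hlt := hzlt v hv
        show g v v < g v v / 2
        linarith
      obtain ⟨b', hb'S, hb'fin, hb'cov⟩ := hScomp.elim_finite_subcover_image hUo hcover
      set T := hb'fin.toFinset with hT_def
      have hTmem : ∀ w, w ∈ T ↔ w ∈ b' := fun w => hb'fin.mem_toFinset
      obtain ⟨w0, hw0⟩ := hSne
      have hw0' := hb'cov hw0
      rw [Set.mem_iUnion₂] at hw0'
      obtain ⟨w1, hw1b, _⟩ := hw0'
      have hTne : T.Nonempty := ⟨w1, (hTmem w1).mpr hw1b⟩
      set δ := T.inf' hTne (fun w => -(g w w) / 2) with hδ_def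
      have hδpos : 0 < δ := by
        rw [hδ_def, Finset.lt_inf'_iff]
        intro w hw
        have hwS : w ∈ S := hb'S ((hTmem w).mp hw)
        have := hzlt w hwS
        linarith
      refine ⟨δ, hδpos, ?_⟩
      intro w hw
      have hw' := hb'cov hw
      rw [Set.mem_iUnion₂] at hw'
      obtain ⟨w', hw'b, hwU⟩ := hw'
      have hw'S : w' ∈ S := hb'S hw'b
      have hinf : δ ≤ -(g w' w') / 2 :=
        Finset.inf'_le _ ((hTmem w').mpr hw'b)
      refine ⟨z w', hzX w' hw'S, ?_⟩
      have : g w' w < g w' w' / 2 := hwU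
      show ⟪z w' - w, Fgrad w⟫ ≤ -δ
      have hgw : g w' w = ⟪z w' - w, Fgrad w⟫ := rfl
      linarith [hgw ▸ this]
  obtain ⟨δ, hδpos, hkey⟩ := key
  -- choose K
  have hev1 : ∀ᶠ k in atTop, ‖h k - Fgrad (x (k - 1))‖ < δ / (2 * D) :=
    hherr.eventually_lt_const (by positivity)
  have hev2 : ∀ᶠ k in atTop, α k < 1 := hα0.eventually_lt_const one_pos
  have hev3 : ∀ᶠ k in atTop, 1 ≤ k := eventually_ge_atTop 1
  obtain ⟨K, hK⟩ := eventually_atTop.mp ((hev1.and hev2).and hev3)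
  refine ⟨δ / (4 * D * (1 + L)), by positivity, K, ?_⟩
  intro k hk hball hgap
  obtain ⟨⟨herr, hα1⟩, hk1⟩ := hK k hk
  have hak : 0 < α k := hαpos k hk1
  have hxkX : x k ∈ X := hxX k hk1
  have hxkS : x k ∈ S := ⟨⟨hxkX, hball⟩, hgap⟩
  obtain ⟨z, hzX, hzineq⟩ := hkey _ hxkS
  -- variational inequality
  have hVI : 0 ≤ ⟪x k - x (k - 1), z - x k⟫ / α k + ⟪h k, z - x k⟫ :=
    vi_lemma hconv hxkX hak (hmin k hk1) z hzX
  set w : EuclideanSpace ℝ (Fin n) := x k - x (k - 1) with hw_def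
  set r : ℝ := ‖w‖ / α k with hr_def
  have hr0 : 0 ≤ r := by positivity
  have hwa : ‖w‖ = r * α k := (div_mul_cancel₀ _ hak.ne').symm
  -- bounds
  have hB1 : ⟪w, z - x k⟫ / α k ≤ r * D := by
    rw [div_le_iff₀ hak]
    calc ⟪w, z - x k⟫ ≤ ‖w‖ * ‖z - x k‖ := real_inner_le_norm _ _
      _ ≤ ‖w‖ * D := mul_le_mul_of_nonneg_left (hDbound z hzX (x k) hxkX) (norm_nonneg _)
      _ = r * D * α k := by rw [hwa]; ring
  have hB2 : ⟪h k, z - x k⟫ = ⟪h k - Fgrad (x k), z - x k⟫ + ⟪z - x k, Fgrad (x k)⟫ := by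
    rw [inner_sub_left, real_inner_comm (z - x k) (Fgrad (x k))]
    ring
  have hB3 : ⟪h k - Fgrad (x k), z - x k⟫ ≤ ‖h k - Fgrad (x k)‖ * D :=
    (real_inner_le_norm _ _).trans
      (mul_le_mul_of_nonneg_left (hDbound z hzX (x k) hxkX) (norm_nonneg _))
  have hB4 : ‖h k - Fgrad (x k)‖ ≤ ‖h k - Fgrad (x (k - 1))‖ + L * ‖w‖ := by
    have htri : ‖h k - Fgrad (x k)‖
        ≤ ‖h k - Fgrad (x (k - 1))‖ + ‖Fgrad (x (k - 1)) - Fgrad (x k)‖ := by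
      have : h k - Fgrad (x k) = (h k - Fgrad (x (k - 1))) + (Fgrad (x (k - 1)) - Fgrad (x k)) := by
        abel
      rw [this]
      exact norm_add_le _ _
    have hlip' : ‖Fgrad (x (k - 1)) - Fgrad (x k)‖ ≤ L * ‖w‖ := by
      have := hLip (x (k - 1)) (x k)
      rwa [norm_sub_rev (x (k-1)) (x k)] at this
    linarith
  -- combine
  have hLw : L * ‖w‖ ≤ L * r := by
    rw [hwa]
    nlinarith [mul_nonneg hL.le hr0]
  have hfinal : δ / 2 < r * D * (1 + L) := by
    have hherrD : ‖h k - Fgrad (x (k - 1))‖ * D < δ / 2 := by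
      have h' := herr
      rw [lt_div_iff₀ (by positivity)] at h'
      linarith
    nlinarith [hVI, hB1, hB2, hB3, hB4, hzineq, hherrD, hLw, hDpos, hr0]
  show r > δ / (4 * D * (1 + L))
  have h1 : δ / (2 * D * (1 + L)) < r := by
    rw [div_lt_iff₀ (by positivity)]
    nlinarith [hfinal]
  have h2 : δ / (4 * D * (1 + L)) < δ / (2 * D * (1 + L)) := by
    apply div_lt_div_of_pos_left hδpos (by positivity)
    nlinarith [hDpos, hL]
  linarith
end
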